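/- arXiv:1703.07772 — 6 statements merged into one kernel-verified Lean document; each statement's English description precedes it below -/
import Mathlib

section
/- Let 1 ≤ p < ∞, w = (w_n) ∈ 𝒲, and let A ⊆ ℕ be a finite set. Then (i) ‖∑_{n∈A} g_n‖_{g(w,p)} = (∑_{n=1}^{|A|} w_n)^{1/p}, and (ii) the vector ∑_{n∈A} g_n is minimal in g(w,p) with respect to the canonical basis. -/
/-!
Along a strictly increasing `φ`, the indicator of `A` is seen exactly at the positions
`φ⁻¹(A)`, of which there are at most `#A`; as `w` is nonincreasing, their weights sum to at most
`w₁ + ⋯ + w_{#A}`, with equality for a `φ` that enumerates `A` first. If `f ≺ 1_A`, then `f` is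
the indicator of some `B ⊆ A`; since `w > 0` the partial sums of `w` increase strictly, so equal
norms force `#B = #A`, i.e. `B = A`.
-/

open Filter Function Set
open scoped ENNReal NNReal Topology

noncomputable section

/-- The Garling norm of a real sequence, with values in `ℝ≥0∞`:
`‖f‖_{g(w,p)} = sup_φ (∑ n, |f (φ n)|^p · w n)^{1/p}`, the supremum being taken over all
strictly increasing maps `φ : ℕ → ℕ`. -/
def garNorm (w : ℕ → ℝ) (p : ℝ) (f : ℕ → ℝ) : ℝ≥0∞ :=
  ⨆ φ : {φ : ℕ → ℕ // StrictMono φ},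
    (∑' n, ENNReal.ofReal (|f (φ.1 n)| ^ p * w n)) ^ (1 / p)

/-- `w ∈ 𝒲`: a normalized, nonincreasing, positive weight tending to zero and non-summable.
(Sequences are indexed from `0`, so `w 0` is the paper's `w₁`.) -/
structure IsGarlingWeight (w : ℕ → ℝ) : Prop where
  pos : ∀ n, 0 < w n
  first : w 0 = 1
  antitone : ∀ n, w (n + 1) ≤ w n
  tendsto_zero : Tendsto w atTop (𝓝 0)
  not_summable : ¬ Summable w

/-- `h` is minimal in `g(w,p)` with respect to the canonical basis: whenever `f ≺ h`
(i.e. `supp f ⊆ supp h`, the coordinates of `f` and `h` agree on `supp f`, and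
`‖f‖_{g(w,p)} = ‖h‖_{g(w,p)}`), it follows that `f = h`. -/
def GarMinimal (w : ℕ → ℝ) (p : ℝ) (h : ℕ → ℝ) : Prop :=
  ∀ f : ℕ → ℝ, Function.support f ⊆ Function.support h →
    (∀ n ∈ Function.support f, f n = h n) →
    garNorm w p f = garNorm w p h → f = h

open Finset

theorem Finset.sum_le_sum_range_card_of_antitone {M : Type*} [AddCommMonoid M] [PartialOrder M]
    [IsOrderedAddMonoid M] {f : ℕ → M} (hf : Antitone f) (S : Finset ℕ) :
    ∑ n ∈ S, f n ≤ ∑ k ∈ range #S, f k := by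
  induction S using Finset.induction_on_max with
  | empty => simp
  | insert a S ha ih =>
    have haS : a ∉ S := fun h => lt_irrefl a (ha a h)
    have hcard : #S ≤ a := by simpa using card_le_card fun b hb => mem_range.2 (ha b hb)
    rw [sum_insert haS, card_insert_of_notMem haS, sum_range_succ, add_comm]
    exact add_le_add ih (hf hcard)

theorem exists_strictMono_forall_lt_card_mem (A : Finset ℕ) :
    ∃ φ : ℕ → ℕ, StrictMono φ ∧ ∀ k < #A, φ k ∈ A := by
  set N := A.sup id
  have hle : ∀ a ∈ A, a ≤ N := fun a ha => le_sup (f := id) ha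
  -- enumerate `A` increasingly, then continue past its maximum
  let φ : ℕ → ℕ := fun k => if h : k < #A then A.orderEmbOfFin rfl ⟨k, h⟩ else N + 1 + k
  have hmem : ∀ k (h : k < #A), φ k ∈ A := fun k h => by
    simp only [φ, dif_pos h]
    exact orderEmbOfFin_mem A rfl _
  refine ⟨φ, fun k l hkl => ?_, hmem⟩
  by_cases hl : l < #A
  · have hk : k < #A := hkl.trans hl
    simp only [φ, dif_pos hk, dif_pos hl]
    exact (A.orderEmbOfFin rfl).strictMono (show (⟨k, hk⟩ : Fin #A) < ⟨l, hl⟩ from hkl)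
  · have hk : φ k ≤ N + 1 + k := by
      by_cases hk : k < #A
      · exact (hle _ (hmem k hk)).trans (by omega)
      · exact (dif_neg hk).le
    have hl : φ l = N + 1 + l := dif_neg hl
    omega

theorem strictMono_sum_range_ofReal {w : ℕ → ℝ} (hw : ∀ n, 0 < w n) :
    StrictMono fun n => ∑ k ∈ range n, ENNReal.ofReal (w k) :=
  strictMono_nat_of_lt_succ fun n => by
    rw [sum_range_succ]
    exact ENNReal.lt_add_right (ENNReal.sum_ne_top.2 fun _ _ => ENNReal.ofReal_ne_top)
      (ENNReal.ofReal_pos.2 (hw n)).ne'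

theorem tsum_ofReal_indicator_comp {p : ℝ} (hp : p ≠ 0) (w : ℕ → ℝ) (A : Finset ℕ)
    {φ : ℕ → ℕ} (hφ : φ.Injective) :
    ∑' n, ENNReal.ofReal (|(fun k => if k ∈ A then (1 : ℝ) else 0) (φ n)| ^ p * w n)
      = ∑ n ∈ A.preimage φ hφ.injOn, ENNReal.ofReal (w n) := by
  rw [tsum_eq_sum (s := A.preimage φ hφ.injOn) fun n hn => by
    simp [Finset.mem_preimage.not.1 hn, Real.zero_rpow hp]]
  exact sum_congr rfl fun n hn => by simp [Finset.mem_preimage.1 hn]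

theorem garNorm_indicator {p : ℝ} (hp : 0 < p) {w : ℕ → ℝ} (hw : Antitone w) (A : Finset ℕ) :
    garNorm w p (fun k => if k ∈ A then 1 else 0)
      = (∑ k ∈ range #A, ENNReal.ofReal (w k)) ^ (1 / p) := by
  refine le_antisymm (iSup_le fun ⟨φ, hφ⟩ => ?_) ?_
  · rw [tsum_ofReal_indicator_comp hp.ne' w A hφ.injective]
    refine ENNReal.rpow_le_rpow ?_ (by positivity)
    calc ∑ n ∈ A.preimage φ hφ.injective.injOn, ENNReal.ofReal (w n)
        ≤ ∑ k ∈ range #(A.preimage φ hφ.injective.injOn), ENNReal.ofReal (w k) :=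
          sum_le_sum_range_card_of_antitone (ENNReal.ofReal_mono.comp_antitone hw) _
      _ ≤ ∑ k ∈ range #A, ENNReal.ofReal (w k) :=
          sum_le_sum_of_subset <| range_subset_range.2 <|
            card_le_card_of_injOn φ (fun n hn => Finset.mem_preimage.1 hn) hφ.injective.injOn
  · obtain ⟨φ, hφ, hmem⟩ := exists_strictMono_forall_lt_card_mem A
    refine le_iSup_of_le (⟨φ, hφ⟩ : {φ : ℕ → ℕ // StrictMono φ}) ?_
    rw [tsum_ofReal_indicator_comp hp.ne' w A hφ.injective]
    gcongr
    exact fun k hk => Finset.mem_preimage.2 (hmem k (mem_range.1 hk))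

theorem eq_indicator_filter_of_support_subset {A : Finset ℕ} {f : ℕ → ℝ}
    (hsupp : support f ⊆ support fun k => if k ∈ A then (1 : ℝ) else 0)
    (hagree : ∀ n ∈ support f, f n = if n ∈ A then 1 else 0) :
    f = fun k => if k ∈ A.filter (f · ≠ 0) then 1 else 0 := by
  funext k
  by_cases hk : f k = 0
  · simp [hk]
  · have hkA : k ∈ A := by simpa using hsupp hk
    simpa [hkA, hk] using hagree k hk

theorem garMinimal_indicator {p : ℝ} (hp : 0 < p) {w : ℕ → ℝ} (hw : Antitone w)
    (hpos : ∀ n, 0 < w n) (A : Finset ℕ) :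
    GarMinimal w p (fun k => if k ∈ A then 1 else 0) := by
  intro f hsupp hagree hnorm
  have hf := eq_indicator_filter_of_support_subset hsupp hagree
  rw [hf, garNorm_indicator hp hw, garNorm_indicator hp hw] at hnorm
  have hcard : #(A.filter (f · ≠ 0)) = #A := (strictMono_sum_range_ofReal hpos).injective
    (ENNReal.rpow_left_injective (one_div_ne_zero hp.ne') hnorm)
  rwa [eq_of_subset_of_card_le (filter_subset _ A) hcard.ge] at hf

/-- For `1 ≤ p < ∞`, `w ∈ 𝒲` and a finite `A ⊆ ℕ`:
(i) `‖∑_{n ∈ A} g_n‖_{g(w,p)} = (∑_{n=1}^{|A|} w_n)^{1/p}`; and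
(ii) the vector `∑_{n ∈ A} g_n` is minimal in `g(w,p)`. -/
theorem garling_indicator_norm_and_minimal (p : ℝ) (hp : 1 ≤ p)
    (w : ℕ → ℝ) (hw : IsGarlingWeight w) (A : Finset ℕ) :
    garNorm w p (fun k => if k ∈ A then 1 else 0)
        = (∑ k ∈ Finset.range A.card, ENNReal.ofReal (w k)) ^ (1 / p) ∧
    GarMinimal w p (fun k => if k ∈ A then 1 else 0) := by
  have hp' : 0 < p := zero_lt_one.trans_le hp
  have hanti : Antitone w := antitone_nat_of_succ_le hw.antitone
  exact ⟨garNorm_indicator hp' hanti A, garMinimal_indicator hp' hanti hw.pos A⟩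
end
end

section
/- Let 1 ≤ p < ∞ and w = (w_n) ∈ 𝒲. Suppose f = (a_n) is a finitely supported scalar sequence that is minimal in g(w,p) with respect to the canonical basis, let r = |supp(f)| and let ψ:{1,…,r}→ℕ be the strictly increasing enumeration of supp(f). Then ‖f‖_{g(w,p)} = (∑_{n=1}^{r} |a_{ψ(n)}|^p w_n)^{1/p}. -/
open Filter Function Set
open scoped ENNReal NNReal Topology

noncomputable section

/-- auxiliary: value of the "greedy" arrangement of the coordinates indexed by `S`. -/
private def garF (p : ℝ) (w a : ℕ → ℝ) (S : Finset ℕ) : ℝ≥0∞ :=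
  ∑ j : Fin S.card, ENNReal.ofReal (|a (S.orderEmbOfFin rfl j)| ^ p * w j)

private lemma garF_eq (p : ℝ) (w a : ℕ → ℝ) (S : Finset ℕ) {k : ℕ} (h : S.card = k) :
    garF p w a S = ∑ j : Fin k, ENNReal.ofReal (|a (S.orderEmbOfFin h j)| ^ p * w j) := by
  subst h; rfl

private lemma strictMono_fin_le {m : ℕ} {f : Fin m → ℕ} (hf : StrictMono f) :
    ∀ (k : ℕ) (h : k < m), k ≤ f ⟨k, h⟩ := by
  intro k
  induction k with
  | zero => intro h; exact Nat.zero_le _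
  | succ i ih =>
      intro h
      have h' : i < m := Nat.lt_of_succ_lt h
      have hlt : f ⟨i, h'⟩ < f ⟨i + 1, h⟩ := hf (by simp [Fin.lt_def])
      exact Nat.succ_le_of_lt (lt_of_le_of_lt (ih h') hlt)

private lemma gar_bound (p : ℝ) (hp : 1 ≤ p) (w : ℕ → ℝ) (hw : IsGarlingWeight w)
    (a : ℕ → ℝ) (ha : (Function.support a).Finite) (φ : ℕ → ℕ) (hφ : StrictMono φ) :
    ∃ S : Finset ℕ, S ⊆ ha.toFinset ∧
      (∑' n, ENNReal.ofReal (|a (φ n)| ^ p * w n)) ≤ garF p w a S := by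
  have hanti : Antitone w := antitone_nat_of_succ_le hw.antitone
  have hT : (φ ⁻¹' Function.support a).Finite := ha.preimage hφ.injective.injOn
  set T : Finset ℕ := hT.toFinset with hTdef
  set F : ℕ → ℝ≥0∞ := fun n => ENNReal.ofReal (|a (φ n)| ^ p * w n) with hF
  refine ⟨T.image φ, ?_, ?_⟩
  · intro s hs
    rcases Finset.mem_image.1 hs with ⟨n, hn, rfl⟩
    have : a (φ n) ≠ 0 := by
      have := (Set.Finite.mem_toFinset hT).1 hn
      simpa [Set.mem_preimage, Function.mem_support] using this
    simpa [Set.Finite.mem_toFinset, Function.mem_support] using this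
  have hcard : (T.image φ).card = T.card := Finset.card_image_of_injective _ hφ.injective
  have hzero : ∀ n ∉ T, F n = 0 := by
    intro n hn
    have : a (φ n) = 0 := by
      by_contra hne
      exact hn ((Set.Finite.mem_toFinset hT).2 hne)
    simp [hF, this, Real.zero_rpow (by linarith : p ≠ 0)]
  have h1 : (∑' n, F n) = ∑ n ∈ T, F n := tsum_eq_sum hzero
  have h2 : ∑ n ∈ T, F n = ∑ j : Fin T.card, F (T.orderEmbOfFin rfl j) :=
    ((Fintype.sum_equiv (T.orderIsoOfFin rfl).toEquiv _ _ (fun j => rfl)).trans (Finset.sum_coe_sort T F)).symm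
  have hcomp : (fun j : Fin T.card => φ (T.orderEmbOfFin rfl j)) =
      (T.image φ).orderEmbOfFin hcard :=
    Finset.orderEmbOfFin_unique hcard
      (fun j => Finset.mem_image_of_mem φ (Finset.orderEmbOfFin_mem _ _ _))
      (hφ.comp (T.orderEmbOfFin rfl).strictMono)
  have h3 : ∑ j : Fin T.card, F (T.orderEmbOfFin rfl j)
      ≤ ∑ j : Fin T.card, ENNReal.ofReal (|a ((T.image φ).orderEmbOfFin hcard j)| ^ p * w j) := by
    refine Finset.sum_le_sum fun j _ => ?_
    have hval : φ (T.orderEmbOfFin rfl j) = (T.image φ).orderEmbOfFin hcard j :=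
      congrFun hcomp j
    have hwle : w (T.orderEmbOfFin rfl j) ≤ w j :=
      hanti (by simpa using strictMono_fin_le (T.orderEmbOfFin rfl).strictMono j j.2)
    refine ENNReal.ofReal_le_ofReal ?_
    rw [hval]
    exact mul_le_mul_of_nonneg_left hwle (Real.rpow_nonneg (abs_nonneg _) p)
  calc (∑' n, F n) = ∑ n ∈ T, F n := h1
    _ = ∑ j : Fin T.card, F (T.orderEmbOfFin rfl j) := h2
    _ ≤ ∑ j : Fin T.card, ENNReal.ofReal (|a ((T.image φ).orderEmbOfFin hcard j)| ^ p * w j) := h3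
    _ = garF p w a (T.image φ) := (garF_eq p w a _ hcard).symm

private lemma gar_attain (p : ℝ) (hp : 1 ≤ p) (w a : ℕ → ℝ)
    (ha : (Function.support a).Finite) (S : Finset ℕ) (hS : S ⊆ ha.toFinset) :
    ∃ φ : ℕ → ℕ, StrictMono φ ∧
      (∑' n, ENNReal.ofReal (|a (φ n)| ^ p * w n)) = garF p w a S ∧
      ∀ n, a (φ n) ≠ 0 → φ n ∈ S := by
  classical
  set N : ℕ := ha.toFinset.sup id + 1 with hN
  have hkey : ∀ s ∈ ha.toFinset, s < N := fun s hs =>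
    Nat.lt_succ_of_le (Finset.le_sup (f := id) hs)
  set φ : ℕ → ℕ := fun n => if h : n < S.card then S.orderEmbOfFin rfl ⟨n, h⟩ else N + n with hφdef
  have hmemS : ∀ (n : ℕ) (h : n < S.card), φ n ∈ S := by
    intro n h
    simp only [hφdef, dif_pos h]
    exact Finset.orderEmbOfFin_mem _ _ _
  have hltN : ∀ (n : ℕ) (h : n < S.card), φ n < N := fun n h => hkey _ (hS (hmemS n h))
  have hout : ∀ n, ¬ n < S.card → a (φ n) = 0 := by
    intro n h
    have hφn : φ n = N + n := by simp [hφdef, dif_neg h]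
    by_contra hne
    have : φ n ∈ ha.toFinset := (Set.Finite.mem_toFinset ha).2 hne
    have := hkey _ this
    omega
  have hφ : StrictMono φ := by
    intro i j hij
    by_cases hj : j < S.card
    · have hi : i < S.card := lt_trans hij hj
      simp only [hφdef, dif_pos hi, dif_pos hj]
      exact (S.orderEmbOfFin rfl).strictMono (show (⟨i, hi⟩ : Fin S.card) < ⟨j, hj⟩ from hij)
    · by_cases hi : i < S.card
      · have h1 : φ i < N := hltN i hi
        have h2 : φ j = N + j := by simp [hφdef, dif_neg hj]
        omega
      · have h1 : φ i = N + i := by simp [hφdef, dif_neg hi]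
        have h2 : φ j = N + j := by simp [hφdef, dif_neg hj]
        omega
  refine ⟨φ, hφ, ?_, ?_⟩
  · have hzero : ∀ n ∉ Finset.range S.card,
        ENNReal.ofReal (|a (φ n)| ^ p * w n) = 0 := by
      intro n hn
      have := hout n (by simpa using hn)
      simp [this, Real.zero_rpow (by linarith : p ≠ 0)]
    rw [tsum_eq_sum hzero, garF_eq p w a S rfl, ← Fin.sum_univ_eq_sum_range]
    refine Finset.sum_congr rfl fun j _ => ?_
    have : φ (j : ℕ) = S.orderEmbOfFin rfl j := by
      simp only [hφdef, dif_pos j.2, Fin.eta]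
    rw [this]
  · intro n hne
    by_cases h : n < S.card
    · exact hmemS n h
    · exact absurd (hout n h) hne

/-- If `f = (a_n)` is finitely supported and minimal in `g(w,p)`, `r` is the
cardinality of its support and `ψ` is the strictly increasing enumeration of its support, then
`‖f‖_{g(w,p)} = (∑_{n=1}^r |a_{ψ(n)}|^p w_n)^{1/p}`. -/
theorem garling_norm_of_minimal (p : ℝ) (hp : 1 ≤ p)
    (w : ℕ → ℝ) (hw : IsGarlingWeight w)
    (a : ℕ → ℝ) (ha : (Function.support a).Finite)
    (hmin : GarMinimal w p a)
    (r : ℕ) (hr : ha.toFinset.card = r) :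
    garNorm w p a
      = (∑ n : Fin r,
          ENNReal.ofReal (|a ((ha.toFinset.orderIsoOfFin hr n : ℕ))| ^ p * w (n : ℕ))) ^ (1 / p) := by
  classical
  have hp0 : (0:ℝ) ≤ 1 / p := by positivity
  -- choose a maximizer S* of garF over subsets of the support
  obtain ⟨Sm, hSmem, hSmax⟩ := Finset.exists_max_image ha.toFinset.powerset (garF p w a)
    ⟨∅, Finset.empty_mem_powerset _⟩
  have hSsub : Sm ⊆ ha.toFinset := Finset.mem_powerset.1 hSmem
  -- garNorm a = (garF Sm) ^ (1/p)
  have hub : garNorm w p a ≤ (garF p w a Sm) ^ (1 / p) := by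
    refine iSup_le fun φ => ?_
    obtain ⟨S, hSsub', hle⟩ := gar_bound p hp w hw a ha φ.1 φ.2
    exact ENNReal.rpow_le_rpow
      (hle.trans (hSmax S (Finset.mem_powerset.2 hSsub'))) hp0
  have hlb : (garF p w a Sm) ^ (1 / p) ≤ garNorm w p a := by
    obtain ⟨φ, hφ, heq, -⟩ := gar_attain p hp w a ha Sm hSsub
    exact le_iSup_of_le ⟨φ, hφ⟩ (by rw [heq])
  have hnorm : garNorm w p a = (garF p w a Sm) ^ (1 / p) := le_antisymm hub hlb
  -- the maximizer must be the full support, by minimality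
  have hfull : Sm = ha.toFinset := by
    by_contra hne
    obtain ⟨s, hs, hsnot⟩ := Finset.exists_of_ssubset (hSsub.ssubset_of_ne hne)
    have has : a s ≠ 0 := by simpa [Set.Finite.mem_toFinset, Function.mem_support] using hs
    set g : ℕ → ℝ := Function.update a s 0 with hg
    have hgs : g s = 0 := Function.update_self s 0 a
    have hgval : ∀ n, n ≠ s → g n = a n := fun n hn => Function.update_of_ne hn 0 a
    have hsupp : Function.support g ⊆ Function.support a := by
      intro n hn
      by_cases h : n = s
      · subst h; exact absurd hgs hn
      · simpa [Function.mem_support, hgval n h] using hn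
    have hagree : ∀ n ∈ Function.support g, g n = a n := by
      intro n hn
      by_cases h : n = s
      · subst h; exact absurd hgs hn
      · exact hgval n h
    have hnormg : garNorm w p g = garNorm w p a := by
      refine le_antisymm ?_ ?_
      · refine iSup_le fun φ => ?_
        refine le_iSup_of_le φ (ENNReal.rpow_le_rpow (ENNReal.tsum_le_tsum fun n => ?_) hp0)
        refine ENNReal.ofReal_le_ofReal (mul_le_mul_of_nonneg_right ?_ (hw.pos n).le)
        refine Real.rpow_le_rpow (abs_nonneg _) ?_ (by linarith)
        by_cases h : φ.1 n = s
        · rw [h, hgs]; simp [abs_nonneg]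
        · rw [hgval _ h]
      · rw [hnorm]
        obtain ⟨φ, hφ, heq, hprop⟩ := gar_attain p hp w a ha Sm hSsub
        have hgφ : ∀ n, g (φ n) = a (φ n) := by
          intro n
          by_cases h : φ n = s
          · exfalso
            have : a (φ n) ≠ 0 := h ▸ has
            exact hsnot (h ▸ hprop n this)
          · exact hgval _ h
        refine le_iSup_of_le ⟨φ, hφ⟩ ?_
        simp only
        rw [show (∑' n, ENNReal.ofReal (|g (φ n)| ^ p * w n))
            = ∑' n, ENNReal.ofReal (|a (φ n)| ^ p * w n) from by
          exact tsum_congr fun n => by rw [hgφ n], heq]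
    have := hmin g hsupp hagree hnormg
    exact has (by rw [← congrFun this s, hgs])
  rw [hnorm, hfull, garF_eq p w a ha.toFinset hr]
  rfl
end
end

section
/- Let 1 ≤ p < ∞ and w ∈ 𝒲. Every normalized block basic sequence (y_n)_{n≥1} of the canonical basis of g(w,p) is 1-dominated by the canonical basis of ℓ_p: for every finitely supported scalar sequence (b_n), ‖∑_n b_n y_n‖_{g(w,p)} ≤ (∑_n |b_n|^p)^{1/p}. -/
open Filter Function Set
open scoped ENNReal NNReal Topology

noncomputable section

/-- Every normalized block basic sequence `(y_n)` of the canonical basis of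
`g(w,p)` is `1`-dominated by the canonical basis of `ℓ_p`: for all finitely supported scalars
`(b_n)`, `‖∑ n, b_n y_n‖_{g(w,p)} ≤ (∑ n, |b_n|^p)^{1/p}`.
Here `y n = ∑_{i=P n}^{P (n+1) - 1} a_i g_i` for scalars `(a_i)` and `0 = P 0 < P 1 < ⋯`. -/
theorem garling_block_dominated_by_lp (p : ℝ) (hp : 1 ≤ p)
    (w : ℕ → ℝ) (hw : IsGarlingWeight w)
    (P : ℕ → ℕ) (hP0 : P 0 = 0) (hP : StrictMono P)
    (a : ℕ → ℝ) (y : ℕ → ℕ → ℝ)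
    (hy : ∀ n i, y n i = if P n ≤ i ∧ i < P (n + 1) then a i else 0)
    (hynz : ∀ n, y n ≠ 0)
    (hnorm : ∀ n, garNorm w p (y n) = 1)
    (b : ℕ → ℝ) (hb : (Function.support b).Finite) :
    garNorm w p (fun i => ∑ n ∈ hb.toFinset, b n * y n i)
      ≤ (∑' n, ENNReal.ofReal (|b n| ^ p)) ^ (1 / p) := by
  have hp0 : (0:ℝ) < p := lt_of_lt_of_le one_pos hp
  -- the block index of a coordinate `i`
  set K : ℕ → ℕ := fun i => Nat.findGreatest (fun k => P k ≤ i) i with hKdef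
  have hK1 : ∀ i, P (K i) ≤ i := fun i =>
    Nat.findGreatest_spec (P := fun k => P k ≤ i) (Nat.zero_le i) (by simp [hP0])
  have hK2 : ∀ i, i < P (K i + 1) := by
    intro i
    by_contra h
    push_neg at h
    have h1 : K i + 1 ≤ P (K i + 1) := hP.le_apply
    exact Nat.findGreatest_is_greatest (Nat.lt_succ_self _) (le_trans h1 h) h
  have hyz : ∀ k i, k ≠ K i → y k i = 0 := by
    intro k i hk
    rw [hy]
    split_ifs with h
    · exfalso
      apply hk
      rcases lt_trichotomy k (K i) with hlt | heq | hgt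
      · have h1 : P (k + 1) ≤ P (K i) := hP.monotone hlt
        have h2 := hK1 i
        omega
      · exact heq
      · have h1 : P (K i + 1) ≤ P k := hP.monotone hgt
        have h2 := hK2 i
        omega
    · rfl
  rw [garNorm]
  apply iSup_le
  intro φ
  have h1p : (0:ℝ) ≤ 1 / p := by positivity
  refine ENNReal.rpow_le_rpow ?_ h1p
  have key : ∀ k, (∑' n, ENNReal.ofReal (|y k (φ.1 n)| ^ p * w n)) ≤ 1 := by
    intro k
    have h := hnorm k
    rw [garNorm] at h
    have h2 : (∑' n, ENNReal.ofReal (|y k (φ.1 n)| ^ p * w n)) ^ (1 / p) ≤ 1 := by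
      rw [← h]
      exact le_iSup (fun ψ : {ψ : ℕ → ℕ // StrictMono ψ} =>
        (∑' n, ENNReal.ofReal (|y k (ψ.1 n)| ^ p * w n)) ^ (1 / p)) φ
    have h3 := ENNReal.rpow_le_rpow h2 hp0.le
    rwa [ENNReal.one_rpow, ← ENNReal.rpow_mul, one_div_mul_cancel hp0.ne',
      ENNReal.rpow_one] at h3
  calc ∑' n, ENNReal.ofReal (|∑ m ∈ hb.toFinset, b m * y m (φ.1 n)| ^ p * w n)
      ≤ ∑' n, ∑' k, ENNReal.ofReal (|b k| ^ p) *
          ENNReal.ofReal (|y k (φ.1 n)| ^ p * w n) := by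
        refine ENNReal.tsum_le_tsum fun n => ?_
        set i := φ.1 n with hi
        have hfle : |∑ m ∈ hb.toFinset, b m * y m i| ≤ |b (K i)| * |y (K i) i| := by
          by_cases hKi : K i ∈ hb.toFinset
          · rw [Finset.sum_eq_single_of_mem (K i) hKi
              (fun m _ hm => by rw [hyz m i hm, mul_zero]), abs_mul]
          · rw [Finset.sum_eq_zero
              (fun m hm => by rw [hyz m i (fun he => hKi (he ▸ hm)), mul_zero])]
            simpa using mul_nonneg (abs_nonneg (b (K i))) (abs_nonneg (y (K i) i))
        refine le_trans ?_ (ENNReal.le_tsum (K i))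
        rw [← ENNReal.ofReal_mul (by positivity)]
        apply ENNReal.ofReal_le_ofReal
        rw [← mul_assoc, ← Real.mul_rpow (abs_nonneg _) (abs_nonneg _)]
        exact mul_le_mul_of_nonneg_right
          (Real.rpow_le_rpow (abs_nonneg _) hfle hp0.le) (hw.pos n).le
    _ = ∑' k, ENNReal.ofReal (|b k| ^ p) *
          ∑' n, ENNReal.ofReal (|y k (φ.1 n)| ^ p * w n) := by
        rw [ENNReal.tsum_comm]
        exact tsum_congr fun k => ENNReal.tsum_mul_left
    _ ≤ ∑' k, ENNReal.ofReal (|b k| ^ p) * 1 :=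
        ENNReal.tsum_le_tsum fun k => mul_le_mul_right (key k) _
    _ = ∑' k, ENNReal.ofReal (|b k| ^ p) := by simp
end
end

section
/- Let 1 ≤ p < ∞ and w ∈ 𝒲. Every normalized block basic sequence of the canonical basis (g_n)_{n≥1} of g(w,p) admits a subsequence that dominates (g_n)_{n≥1}. -/
/-!
If infinitely many blocks contain a coordinate with `|a i| ^ p ≥ δ`, pick one such coordinate
in each of them: along these coordinates `∑ b_j y_{k_j}` dominates `b` entrywise up to the
factor `δ`, and the Garling norm is monotone under passing to subsequences.

Otherwise the coordinates of the blocks tend to zero. As `w ≤ 1`, `‖b‖_{g(w,p)} ≤ ‖b‖_p`, so it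
suffices to find blocks with a lower `ℓ_p` estimate. A norm-one block has a finite selection of
coordinates whose Garling sum exceeds `3/4`; if its coordinates are small, shifting the weights
by `M` costs at most `1/4`. Choose the blocks one after the other, each with a selection of
Garling sum `≥ 1/2` against the weights shifted by the number of points selected before;
concatenating the selections over the support of `b` gives
`‖∑ b_j y_{k_j}‖^p ≥ (1/2) ∑ |b_j|^p`.
-/

open Filter Function Set
open scoped ENNReal NNReal Topology

noncomputable section

open Finset

section GarlingNorm

variable {w : ℕ → ℝ} {p : ℝ}

lemma IsGarlingWeight.antitone' (hw : IsGarlingWeight w) : Antitone w :=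
  antitone_nat_of_succ_le hw.antitone

lemma IsGarlingWeight.le_one (hw : IsGarlingWeight w) (n : ℕ) : w n ≤ 1 :=
  hw.first ▸ hw.antitone' n.zero_le

lemma le_garNorm (f : ℕ → ℝ) {φ : ℕ → ℕ} (hφ : StrictMono φ) :
    (∑' n, ENNReal.ofReal (|f (φ n)| ^ p * w n)) ^ (1 / p) ≤ garNorm w p f :=
  le_iSup (fun φ : {φ : ℕ → ℕ // StrictMono φ} =>
    (∑' n, ENNReal.ofReal (|f (φ.1 n)| ^ p * w n)) ^ (1 / p)) ⟨φ, hφ⟩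

lemma garNorm_le_of_rpow_le_comp (hp : 0 ≤ p) (hw : ∀ n, 0 ≤ w n) {f g : ℕ → ℝ} {C : ℝ}
    (hC : 0 ≤ C) {ι : ℕ → ℕ} (hι : StrictMono ι) (h : ∀ n, |f n| ^ p ≤ C * |g (ι n)| ^ p) :
    garNorm w p f ≤ ENNReal.ofReal C ^ (1 / p) * garNorm w p g := by
  have hp' : 0 ≤ 1 / p := one_div_nonneg.2 hp
  refine iSup_le fun ⟨φ, hφ⟩ => ?_
  have hterm : ∀ n, ENNReal.ofReal (|f (φ n)| ^ p * w n)
      ≤ ENNReal.ofReal C * ENNReal.ofReal (|g (ι (φ n))| ^ p * w n) := fun n => by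
    rw [← ENNReal.ofReal_mul hC, ← mul_assoc]
    exact ENNReal.ofReal_le_ofReal (mul_le_mul_of_nonneg_right (h _) (hw n))
  calc (∑' n, ENNReal.ofReal (|f (φ n)| ^ p * w n)) ^ (1 / p)
      ≤ (ENNReal.ofReal C * ∑' n, ENNReal.ofReal (|g (ι (φ n))| ^ p * w n)) ^ (1 / p) := by
        rw [← ENNReal.tsum_mul_left]
        exact ENNReal.rpow_le_rpow (ENNReal.tsum_le_tsum hterm) hp'
    _ ≤ ENNReal.ofReal C ^ (1 / p) * garNorm w p g := by
        rw [ENNReal.mul_rpow_of_nonneg _ _ hp']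
        exact mul_le_mul_right (le_garNorm g (hι.comp hφ)) _

lemma garNorm_le_tsum_rpow (hp : 0 ≤ p) (hw : ∀ n, w n ≤ 1) (f : ℕ → ℝ) :
    garNorm w p f ≤ (∑' i, ENNReal.ofReal (|f i| ^ p)) ^ (1 / p) := by
  refine iSup_le fun ⟨φ, hφ⟩ => ENNReal.rpow_le_rpow ?_ (one_div_nonneg.2 hp)
  calc ∑' n, ENNReal.ofReal (|f (φ n)| ^ p * w n) ≤ ∑' n, ENNReal.ofReal (|f (φ n)| ^ p) :=
        ENNReal.tsum_le_tsum fun n => ENNReal.ofReal_le_ofReal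
          (mul_le_of_le_one_right (by positivity) (hw n))
    _ ≤ ∑' i, ENNReal.ofReal (|f i| ^ p) :=
        ENNReal.tsum_comp_le_tsum_of_injective hφ.injective _

lemma exists_lt_sum_of_lt_garNorm (hp : 0 ≤ p) (hw : ∀ n, 0 ≤ w n) {f : ℕ → ℝ} {c : ℝ}
    (h : ENNReal.ofReal c ^ (1 / p) < garNorm w p f) :
    ∃ φ : ℕ → ℕ, StrictMono φ ∧ ∃ N, c < ∑ s ∈ range N, |f (φ s)| ^ p * w s := by
  by_contra! hle
  refine h.not_ge (iSup_le fun ⟨φ, hφ⟩ => ENNReal.rpow_le_rpow ?_ (one_div_nonneg.2 hp))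
  rw [ENNReal.tsum_eq_iSup_nat]
  refine iSup_le fun N => ?_
  rw [← ENNReal.ofReal_sum_of_nonneg fun s _ => by have := hw s; positivity]
  exact ENNReal.ofReal_le_ofReal (hle φ hφ N)

end GarlingNorm

section GarlingSum

variable {w : ℕ → ℝ} {p : ℝ}

/-- The Garling sum of `f` along the finite set `S`: the `t`-th smallest element of `S`
carries the weight `w t`. -/
def garSum (w : ℕ → ℝ) (p : ℝ) (f : ℕ → ℝ) (S : Finset ℕ) : ℝ :=
  ∑ i ∈ S, |f i| ^ p * w #{j ∈ S | j < i}

lemma ofReal_garSum_rpow_le_garNorm (hp : 0 ≤ p) (hw : ∀ n, 0 ≤ w n) (f : ℕ → ℝ)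
    (S : Finset ℕ) : ENNReal.ofReal (garSum w p f S) ^ (1 / p) ≤ garNorm w p f := by
  classical
  obtain ⟨m, hSm⟩ := S.exists_nat_subset_range
  -- `Nat.nth q` enumerates `S` in increasing order and then continues past `S`.
  set q : ℕ → Prop := fun i => i ∈ S ∨ m ≤ i
  have hq : {i | q i}.Infinite :=
    Set.infinite_of_forall_exists_gt fun i => ⟨m + i + 1, Or.inr (by omega), by omega⟩
  have hrank : ∀ i ∈ S, Nat.count q i = #{j ∈ S | j < i} := fun i hi => by
    have him := Finset.mem_range.1 (hSm hi)
    rw [Nat.count_eq_card_filter_range]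
    congr 1
    ext j
    simp only [mem_filter, Finset.mem_range, q]
    constructor
    · rintro ⟨hji, hj | hj⟩
      · exact ⟨hj, hji⟩
      · omega
    · rintro ⟨hj, hji⟩
      exact ⟨hji, Or.inl hj⟩
  have hinj : Set.InjOn (Nat.count q) S := fun i hi j hj h =>
    Nat.count_injective (Or.inl hi) (Or.inl hj) h
  calc ENNReal.ofReal (garSum w p f S) ^ (1 / p)
      = (∑ n ∈ S.image (Nat.count q),
          ENNReal.ofReal (|f (Nat.nth q n)| ^ p * w n)) ^ (1 / p) := by
        have hterm : ∀ i ∈ S, 0 ≤ |f i| ^ p * w #{j ∈ S | j < i} := fun i _ =>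
          mul_nonneg (by positivity) (hw _)
        rw [garSum, ENNReal.ofReal_sum_of_nonneg hterm, sum_image hinj]
        refine congrArg (· ^ (1 / p)) (sum_congr rfl fun i hi => ?_)
        rw [Nat.nth_count (Or.inl hi), hrank i hi]
    _ ≤ (∑' n, ENNReal.ofReal (|f (Nat.nth q n)| ^ p * w n)) ^ (1 / p) :=
        ENNReal.rpow_le_rpow (ENNReal.sum_le_tsum _) (one_div_nonneg.2 hp)
    _ ≤ garNorm w p f := le_garNorm f (Nat.nth_strictMono hq)

lemma garNorm_le_of_sum_rpow_le_garSum (hp : 0 < p) (hw0 : ∀ n, 0 ≤ w n) (hw1 : ∀ n, w n ≤ 1)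
    {b g : ℕ → ℝ} {F T : Finset ℕ} (hb : ∀ j ∉ F, b j = 0) {C : ℝ} (hC : 0 ≤ C)
    (h : ∑ j ∈ F, |b j| ^ p ≤ C * garSum w p g T) :
    garNorm w p b ≤ ENNReal.ofReal (C ^ (1 / p)) * garNorm w p g := by
  have hp' : 0 ≤ 1 / p := by positivity
  calc garNorm w p b ≤ (∑' i, ENNReal.ofReal (|b i| ^ p)) ^ (1 / p) :=
        garNorm_le_tsum_rpow hp.le hw1 b
    _ = ENNReal.ofReal (∑ j ∈ F, |b j| ^ p) ^ (1 / p) := by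
        rw [tsum_eq_sum (s := F) fun j hj => by
            rw [hb j hj, abs_zero, Real.zero_rpow hp.ne', ENNReal.ofReal_zero],
          ENNReal.ofReal_sum_of_nonneg fun j _ => by positivity]
    _ ≤ ENNReal.ofReal (C * garSum w p g T) ^ (1 / p) := by gcongr
    _ = ENNReal.ofReal (C ^ (1 / p)) * ENNReal.ofReal (garSum w p g T) ^ (1 / p) := by
        rw [ENNReal.ofReal_mul hC, ENNReal.mul_rpow_of_nonneg _ _ hp',
          ENNReal.ofReal_rpow_of_nonneg hC hp']
    _ ≤ ENNReal.ofReal (C ^ (1 / p)) * garNorm w p g :=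
        mul_le_mul_right (ofReal_garSum_rpow_le_garNorm hp.le hw0 g T) _

lemma garSum_image_range {φ : ℕ → ℕ} (hφ : StrictMono φ) (f : ℕ → ℝ) (N : ℕ) :
    garSum w p f ((range N).image φ) = ∑ s ∈ range N, |f (φ s)| ^ p * w s := by
  rw [garSum, sum_image fun s _ t _ h => hφ.injective h]
  refine sum_congr rfl fun s hs => ?_
  have hrank : {t ∈ range N | φ t < φ s} = range s := by
    ext t
    simp only [mem_filter, Finset.mem_range, hφ.lt_iff_lt] at hs ⊢
    omega
  rw [filter_image, card_image_of_injective _ hφ.injective, hrank, card_range]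

lemma garSum_le_garSum_of_subset (hp : p ≠ 0) (hw : Antitone w)
    {f : ℕ → ℝ} {S T : Finset ℕ} (hTS : T ⊆ S) (hf : ∀ i ∈ S, i ∉ T → f i = 0) :
    garSum w p f S ≤ garSum w p f T := by
  rw [garSum, ← sum_subset hTS fun i hi hiT => by rw [hf i hi hiT, abs_zero,
    Real.zero_rpow hp, zero_mul]]
  exact sum_le_sum fun i _ => mul_le_mul_of_nonneg_left
    (hw (card_le_card (filter_subset_filter _ hTS))) (by positivity)

end GarlingSum

section BlockSelection

variable {w : ℕ → ℝ} {p : ℝ}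

lemma sum_mul_sub_sum_mul_shift_le (hw : Antitone w) (hw0 : ∀ n, 0 ≤ w n) (hw1 : ∀ n, w n ≤ 1)
    {c : ℕ → ℝ} {ε : ℝ} (hc : ∀ s, 0 ≤ c s) (hcε : ∀ s, c s ≤ ε) (M N : ℕ) :
    ∑ s ∈ range N, c s * w s - ∑ s ∈ range N, c s * w (M + s) ≤ ε * M := by
  have hsplit := sum_range_add w M N
  have hN : ∑ s ∈ range N, w s ≤ ∑ s ∈ range (M + N), w s :=
    sum_le_sum_of_subset_of_nonneg (range_subset_range.2 (by omega)) fun i _ _ => hw0 i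
  have hM : ∑ s ∈ range M, w s ≤ M := by simpa using sum_le_sum fun s (_ : s ∈ range M) => hw1 s
  calc ∑ s ∈ range N, c s * w s - ∑ s ∈ range N, c s * w (M + s)
      = ∑ s ∈ range N, c s * (w s - w (M + s)) := by simp only [mul_sub, sum_sub_distrib]
    _ ≤ ∑ s ∈ range N, ε * (w s - w (M + s)) := sum_le_sum fun s _ =>
        mul_le_mul_of_nonneg_right (hcε s) (sub_nonneg.2 (hw (by omega)))
    _ = ε * (∑ s ∈ range N, w s - ∑ s ∈ range N, w (M + s)) := by
        simp only [mul_sub, sum_sub_distrib, mul_sum]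
    _ ≤ ε * M := mul_le_mul_of_nonneg_left (by linarith) ((hc 0).trans (hcε 0))

lemma IsGarlingWeight.exists_half_le_garSum_shift (hw : IsGarlingWeight w) (hp : 0 < p)
    {f : ℕ → ℝ} (hf : garNorm w p f = 1) {ε : ℝ} (hfε : ∀ i, |f i| ^ p ≤ ε) {M : ℕ}
    (hεM : ε * M ≤ 1 / 4) :
    ∃ S : Finset ℕ, (∀ i ∈ S, f i ≠ 0) ∧ 1 / 2 ≤ garSum (fun n => w (M + n)) p f S := by
  classical
  have hw0 : ∀ n, 0 ≤ w n := fun n => (hw.pos n).le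
  have h34 : ENNReal.ofReal (3 / 4) ^ (1 / p) < garNorm w p f := by
    rw [hf]
    exact ENNReal.rpow_lt_one (by rw [ENNReal.ofReal_lt_one]; norm_num) (by positivity)
  obtain ⟨φ, hφ, N, hN⟩ := exists_lt_sum_of_lt_garNorm hp.le hw0 h34
  have hshift := sum_mul_sub_sum_mul_shift_le hw.antitone' hw0 hw.le_one
    (c := fun s => |f (φ s)| ^ p) (fun s => by positivity) (fun s => hfε _) M N
  refine ⟨((range N).image φ).filter (f · ≠ 0), fun i hi => (mem_filter.1 hi).2, ?_⟩
  calc 1 / 2 ≤ ∑ s ∈ range N, |f (φ s)| ^ p * w (M + s) := by linarith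
    _ = garSum (fun n => w (M + n)) p f ((range N).image φ) := (garSum_image_range hφ f N).symm
    _ ≤ _ := garSum_le_garSum_of_subset hp.ne' (fun m n hmn => hw.antitone' (by omega))
        (filter_subset _ _) fun i hiS hi => not_not.1 fun hfi => hi (mem_filter.2 ⟨hiS, hfi⟩)

end BlockSelection

section Concatenation

lemma exists_strictMono_finset_seq {Q : ℕ → ℕ → Finset ℕ → Prop}
    (h : ∀ K M, ∃ n, K < n ∧ ∃ S, Q n M S) :
    ∃ k : ℕ → ℕ, StrictMono k ∧ ∃ S : ℕ → Finset ℕ,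
      ∀ t, Q (k t) (∑ u ∈ range t, #(S u)) (S t) := by
  choose n hn S hS using h
  -- `state t` is the pair (previous block index, number of points selected so far).
  let state : ℕ → ℕ × ℕ := fun t =>
    Nat.rec (0, 0) (fun _ q => (n q.1 q.2, q.2 + #(S q.1 q.2))) t
  have hstate : ∀ t, (state t).2 = ∑ u ∈ range t, #(S (state u).1 (state u).2) := by
    intro t
    induction t with
    | zero => rfl
    | succ t ih => rw [sum_range_succ, ← ih]
  refine ⟨fun t => n (state t).1 (state t).2, strictMono_nat_of_lt_succ fun t => hn _ _,
    fun t => S (state t).1 (state t).2, fun t => ?_⟩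
  rw [← hstate]
  exact hS _ _

variable {S : ℕ → Finset ℕ}

lemma card_filter_lt_biUnion_le (hS : ∀ u v, u < v → ∀ x ∈ S u, ∀ y ∈ S v, x < y) (F : Finset ℕ) {j i : ℕ} (hi : i ∈ S j) :
    #{x ∈ F.biUnion S | x < i} ≤ ∑ u ∈ range j, #(S u) + #{x ∈ S j | x < i} := by
  have hsub : {x ∈ F.biUnion S | x < i} ⊆ (range j).biUnion S ∪ {x ∈ S j | x < i} := by
    intro x hx
    simp only [mem_filter, Finset.mem_biUnion] at hx
    obtain ⟨⟨u, -, hxu⟩, hxi⟩ := hx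
    rcases lt_trichotomy u j with h | rfl | h
    · exact mem_union_left _ (Finset.mem_biUnion.2 ⟨u, Finset.mem_range.2 h, hxu⟩)
    · exact mem_union_right _ (mem_filter.2 ⟨hxu, hxi⟩)
    · exact absurd (hS j u h i hi x hxu) hxi.not_gt
  calc #{x ∈ F.biUnion S | x < i} ≤ #((range j).biUnion S ∪ {x ∈ S j | x < i}) :=
        card_le_card hsub
    _ ≤ #((range j).biUnion S) + #{x ∈ S j | x < i} := card_union_le _ _
    _ ≤ _ := Nat.add_le_add_right card_biUnion_le _

lemma sum_mul_le_garSum_biUnion (hS : ∀ u v, u < v → ∀ x ∈ S u, ∀ y ∈ S v, x < y)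
    {w : ℕ → ℝ} {p : ℝ} (hw : Antitone w) {F : Finset ℕ}
    {a b Z : ℕ → ℝ} {c : ℝ} (hZ : ∀ j ∈ F, ∀ i ∈ S j, Z i = b j * a i)
    (hc : ∀ j ∈ F, c ≤ garSum (fun n => w (∑ u ∈ range j, #(S u) + n)) p a (S j)) :
    ∑ j ∈ F, |b j| ^ p * c ≤ garSum w p Z (F.biUnion S) := by
  have hdisj : (F : Set ℕ).PairwiseDisjoint S := fun u _ v _ huv => by
    rcases huv.lt_or_gt with h | h
    · exact disjoint_left.2 fun x hxu hxv => lt_irrefl x (hS u v h x hxu x hxv)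
    · exact disjoint_left.2 fun x hxu hxv => lt_irrefl x (hS v u h x hxv x hxu)
  rw [garSum, sum_biUnion hdisj]
  refine sum_le_sum fun j hj => ?_
  calc |b j| ^ p * c
      ≤ |b j| ^ p * garSum (fun n => w (∑ u ∈ range j, #(S u) + n)) p a (S j) :=
        mul_le_mul_of_nonneg_left (hc j hj) (by positivity)
    _ ≤ ∑ i ∈ S j, |Z i| ^ p * w #{x ∈ F.biUnion S | x < i} := by
        rw [garSum, mul_sum]
        refine sum_le_sum fun i hi => ?_
        rw [hZ j hj i hi, abs_mul, Real.mul_rpow (abs_nonneg _) (abs_nonneg _), mul_assoc]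
        exact mul_le_mul_of_nonneg_left (mul_le_mul_of_nonneg_left
          (hw (card_filter_lt_biUnion_le hS F hi)) (by positivity)) (by positivity)

end Concatenation

def DominatesGarlingBasis (w : ℕ → ℝ) (p : ℝ) (x : ℕ → ℕ → ℝ) : Prop :=
  ∃ C : ℝ, 0 < C ∧ ∀ (b : ℕ → ℝ) (hb : (Function.support b).Finite),
    garNorm w p b ≤ ENNReal.ofReal C * garNorm w p (fun i => ∑ j ∈ hb.toFinset, b j * x j i)

section Blocks

variable {w : ℕ → ℝ} {p : ℝ} {P : ℕ → ℕ} {a : ℕ → ℝ} {y : ℕ → ℕ → ℝ}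

lemma block_apply_of_mem (hP : StrictMono P)
    (hy : ∀ n i, y n i = if P n ≤ i ∧ i < P (n + 1) then a i else 0) {n i : ℕ}
    (hi : P n ≤ i ∧ i < P (n + 1)) (m : ℕ) : y m i = if m = n then a i else 0 := by
  by_cases hm : m = n
  · rw [hy, hm, if_pos hi, if_pos rfl]
  rw [hy, if_neg hm, if_neg]
  rintro ⟨hmi, him⟩
  rcases lt_or_gt_of_ne hm with h | h
  · have : P (m + 1) ≤ P n := hP.monotone h
    omega
  · have : P (n + 1) ≤ P m := hP.monotone h
    omega

lemma sum_mul_apply_of_mem_block (hP : StrictMono P)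
    (hy : ∀ n i, y n i = if P n ≤ i ∧ i < P (n + 1) then a i else 0) {k : ℕ → ℕ}
    (hk : Injective k) {F : Finset ℕ} {b : ℕ → ℝ} (hb : ∀ j ∉ F, b j = 0) {j i : ℕ}
    (hi : P (k j) ≤ i ∧ i < P (k j + 1)) : ∑ j' ∈ F, b j' * y (k j') i = b j * a i := by
  simp only [block_apply_of_mem hP hy hi, hk.eq_iff, mul_ite, mul_zero, sum_ite_eq']
  split_ifs with hj
  · rfl
  · rw [hb j hj, zero_mul]

lemma exists_dominates_of_frequently_large (hp : 0 < p) (hw : ∀ n, 0 ≤ w n)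
    (hP : StrictMono P) (hy : ∀ n i, y n i = if P n ≤ i ∧ i < P (n + 1) then a i else 0)
    (hlarge : ∃ δ > 0, ∃ᶠ n in atTop, ∃ i, (P n ≤ i ∧ i < P (n + 1)) ∧ δ ≤ |a i| ^ p) :
    ∃ k : ℕ → ℕ, StrictMono k ∧ DominatesGarlingBasis w p (fun j => y (k j)) := by
  obtain ⟨δ, hδ, hfreq⟩ := hlarge
  obtain ⟨k, hk, hkδ⟩ := extraction_of_frequently_atTop hfreq
  choose ι hι hιδ using hkδ
  have hιmono : StrictMono ι := fun j j' h =>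
    (hι j).2.trans_le ((hP.monotone (Nat.succ_le_of_lt (hk h))).trans (hι j').1)
  refine ⟨k, hk, δ⁻¹ ^ (1 / p), by positivity, fun b hb => ?_⟩
  have hbF : ∀ j ∉ hb.toFinset, b j = 0 := fun j hj => by simpa using hj
  rw [← ENNReal.ofReal_rpow_of_nonneg (by positivity) (by positivity)]
  refine garNorm_le_of_rpow_le_comp hp.le hw (by positivity) hιmono fun j => ?_
  rw [sum_mul_apply_of_mem_block hP hy hk.injective hbF (hι j), abs_mul,
    Real.mul_rpow (abs_nonneg _) (abs_nonneg _)]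
  calc |b j| ^ p = δ⁻¹ * (|b j| ^ p * δ) := by field_simp
    _ ≤ δ⁻¹ * (|b j| ^ p * |a (ι j)| ^ p) := by gcongr; exact hιδ j

lemma IsGarlingWeight.exists_block_half_le_garSum_shift (hw : IsGarlingWeight w) (hp : 0 < p)
    (hy : ∀ n i, y n i = if P n ≤ i ∧ i < P (n + 1) then a i else 0)
    (hnorm : ∀ n, garNorm w p (y n) = 1)
    (hsmall : ∀ δ > 0, ∀ᶠ n in atTop, ∀ i, P n ≤ i ∧ i < P (n + 1) → |a i| ^ p < δ) (K M : ℕ) :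
    ∃ n, K < n ∧ ∃ S : Finset ℕ, (∀ i ∈ S, P n ≤ i ∧ i < P (n + 1)) ∧
      1 / 2 ≤ garSum (fun m => w (M + m)) p a S := by
  have hε : (0 : ℝ) < 1 / (4 * (M + 1)) := by positivity
  obtain ⟨n, hn, hKn⟩ := ((hsmall _ hε).and (eventually_gt_atTop K)).exists
  have hyε : ∀ i, |y n i| ^ p ≤ 1 / (4 * (M + 1)) := fun i => by
    rw [hy]
    split_ifs with hi
    · exact (hn i hi).le
    · rw [abs_zero, Real.zero_rpow hp.ne']
      exact hε.le
  have hεM : 1 / (4 * ((M : ℝ) + 1)) * M ≤ 1 / 4 := by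
    rw [div_mul_eq_mul_div, one_mul, div_le_div_iff₀ (by positivity) (by norm_num)]
    linarith
  obtain ⟨S, hSnz, hS⟩ := hw.exists_half_le_garSum_shift hp (hnorm n) hyε hεM
  have hSblock : ∀ i ∈ S, P n ≤ i ∧ i < P (n + 1) := fun i hi => by
    by_contra h
    exact hSnz i hi (by rw [hy, if_neg h])
  refine ⟨n, hKn, S, hSblock, hS.trans_eq (sum_congr rfl fun i hi => ?_)⟩
  rw [hy, if_pos (hSblock i hi)]

lemma IsGarlingWeight.exists_dominates_of_eventually_small (hw : IsGarlingWeight w) (hp : 0 < p)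
    (hP : StrictMono P) (hy : ∀ n i, y n i = if P n ≤ i ∧ i < P (n + 1) then a i else 0)
    (hnorm : ∀ n, garNorm w p (y n) = 1)
    (hsmall : ∀ δ > 0, ∀ᶠ n in atTop, ∀ i, P n ≤ i ∧ i < P (n + 1) → |a i| ^ p < δ) :
    ∃ k : ℕ → ℕ, StrictMono k ∧ DominatesGarlingBasis w p (fun j => y (k j)) := by
  obtain ⟨k, hk, S, hkS⟩ :=
    exists_strictMono_finset_seq (hw.exists_block_half_le_garSum_shift hp hy hnorm hsmall)
  have hord : ∀ u v, u < v → ∀ x ∈ S u, ∀ z ∈ S v, x < z := fun u v huv x hx z hz =>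
    ((hkS u).1 x hx).2.trans_le
      ((hP.monotone (Nat.succ_le_of_lt (hk huv))).trans ((hkS v).1 z hz).1)
  refine ⟨k, hk, 2 ^ (1 / p), by positivity, fun b hb => ?_⟩
  have hbF : ∀ j ∉ hb.toFinset, b j = 0 := fun j hj => by simpa using hj
  refine garNorm_le_of_sum_rpow_le_garSum hp (fun n => (hw.pos n).le) hw.le_one hbF zero_le_two
    (T := hb.toFinset.biUnion S) ?_
  rw [← div_le_iff₀' two_pos, div_eq_mul_one_div, sum_mul]
  exact sum_mul_le_garSum_biUnion hord hw.antitone'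
    (fun j _ i hi => sum_mul_apply_of_mem_block hP hy hk.injective hbF ((hkS j).1 i hi))
    (fun j _ => (hkS j).2)

end Blocks

theorem garling_block_subsequence_dominates_general (p : ℝ) (hp : 1 ≤ p)
    (w : ℕ → ℝ) (hw : IsGarlingWeight w)
    (P : ℕ → ℕ) (hP : StrictMono P)
    (a : ℕ → ℝ) (y : ℕ → ℕ → ℝ)
    (hy : ∀ n i, y n i = if P n ≤ i ∧ i < P (n + 1) then a i else 0)
    (hnorm : ∀ n, garNorm w p (y n) = 1) :
    ∃ k : ℕ → ℕ, StrictMono k ∧ ∃ C : ℝ, 0 < C ∧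
      ∀ (b : ℕ → ℝ) (hb : (Function.support b).Finite),
        garNorm w p b
          ≤ ENNReal.ofReal C * garNorm w p (fun i => ∑ j ∈ hb.toFinset, b j * y (k j) i) := by
  have hp0 : 0 < p := by linarith
  by_cases hlarge : ∃ δ > 0, ∃ᶠ n in atTop, ∃ i, (P n ≤ i ∧ i < P (n + 1)) ∧ δ ≤ |a i| ^ p
  · exact exists_dominates_of_frequently_large hp0 (fun n => (hw.pos n).le) hP hy hlarge
  · push Not at hlarge
    exact hw.exists_dominates_of_eventually_small hp0 hP hy hnorm hlarge

/-- Every normalized block basic sequence of the canonical basis `(g_n)` of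
`g(w,p)` admits a subsequence that dominates `(g_n)`. -/
theorem garling_block_subsequence_dominates (p : ℝ) (hp : 1 ≤ p)
    (w : ℕ → ℝ) (hw : IsGarlingWeight w)
    (P : ℕ → ℕ) (hP0 : P 0 = 0) (hP : StrictMono P)
    (a : ℕ → ℝ) (y : ℕ → ℕ → ℝ)
    (hy : ∀ n i, y n i = if P n ≤ i ∧ i < P (n + 1) then a i else 0)
    (hynz : ∀ n, y n ≠ 0)
    (hnorm : ∀ n, garNorm w p (y n) = 1) :
    ∃ k : ℕ → ℕ, StrictMono k ∧ ∃ C : ℝ, 0 < C ∧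
      ∀ (b : ℕ → ℝ) (hb : (Function.support b).Finite),
        garNorm w p b
          ≤ ENNReal.ofReal C * garNorm w p (fun i => ∑ j ∈ hb.toFinset, b j * y (k j) i) :=
  garling_block_subsequence_dominates_general p hp w hw P hP a y hy hnorm
end
end

section
/- Let 1 ≤ p < ∞ and w ∈ 𝒲. If (y_n)_{n≥1} is a semi-normalized block basic sequence of the canonical basis of g(w,p), then lim_{m→∞} ‖∑_{n=1}^m y_n‖_{g(w,p)} = ∞. -/
open Filter Function Set
open scoped ENNReal NNReal Topology

noncomputable section

/-!
A finite selection of `f` is a finite set `K` of positions together with indices `φ k`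
increasing in `k ∈ K`; its mass is `∑ k ∈ K, |f (φ k)| ^ p * w k`. As `w` is nonincreasing,
positions can be compressed, so every finite selection has mass at most `‖f‖ ^ p`.

The `m`-th partial sum is the truncation of `a` below `P m`, and the truncations of `a` increase
to `a` in norm, so it suffices to show `‖a‖ = ∞`. If `‖a‖ < ∞`, then `a i → 0` (otherwise the
large entries alone have infinite mass, `w` being non-summable), while every tail
`a · 1_{[M, ∞)}` dominates a block and so has norm `≥ c`. A gliding hump then produces finite
selections of unbounded mass: given one using positions `< L` and indices `< M`, take a selection
of mass `> c ^ p` in a tail so far beyond `M` that its first `L` positions carry less than half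
of that, and append the rest.
-/

section
variable {w : ℕ → ℝ} {p : ℝ} {f g : ℕ → ℝ}

lemma tsum_le_garNorm_rpow (hp : 0 < p) {φ : ℕ → ℕ} (hφ : StrictMono φ) :
    ∑' k, ENNReal.ofReal (|f (φ k)| ^ p * w k) ≤ garNorm w p f ^ p := by
  have h := ENNReal.rpow_le_rpow (le_iSup (fun φ : {φ : ℕ → ℕ // StrictMono φ} =>
    (∑' n, ENNReal.ofReal (|f (φ.1 n)| ^ p * w n)) ^ (1 / p)) ⟨φ, hφ⟩) hp.le
  rwa [← ENNReal.rpow_mul, one_div_mul_cancel hp.ne', ENNReal.rpow_one] at h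

lemma garNorm_le_of_forall_tsum_le (hp : 0 < p) {B : ℝ≥0∞}
    (h : ∀ φ : ℕ → ℕ, StrictMono φ → ∑' k, ENNReal.ofReal (|f (φ k)| ^ p * w k) ≤ B ^ p) :
    garNorm w p f ≤ B :=
  iSup_le fun φ => by
    have h' := ENNReal.rpow_le_rpow (h φ.1 φ.2) (one_div_nonneg.2 hp.le)
    rwa [← ENNReal.rpow_mul, mul_one_div_cancel hp.ne', ENNReal.rpow_one] at h'

lemma garNorm_mono (hw₀ : ∀ n, 0 ≤ w n) (hp : 0 ≤ p) (h : ∀ i, |f i| ≤ |g i|) :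
    garNorm w p f ≤ garNorm w p g :=
  iSup_mono fun φ => ENNReal.rpow_le_rpow (ENNReal.tsum_le_tsum fun n => ENNReal.ofReal_le_ofReal
    (mul_le_mul_of_nonneg_right (Real.rpow_le_rpow (abs_nonneg _) (h _) hp) (hw₀ n)))
    (by positivity)

lemma garNorm_indicator_mono (hw₀ : ∀ n, 0 ≤ w n) (hp : 0 ≤ p) {s t : Set ℕ} (hst : s ⊆ t) :
    garNorm w p (s.indicator f) ≤ garNorm w p (t.indicator f) :=
  garNorm_mono hw₀ hp fun i => by
    by_cases hs : i ∈ s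
    · simp [hs, hst hs]
    · simp [hs]

lemma garNorm_indicator_le (hw₀ : ∀ n, 0 ≤ w n) (hp : 0 ≤ p) (s : Set ℕ) :
    garNorm w p (s.indicator f) ≤ garNorm w p f := by
  simpa using garNorm_indicator_mono (f := f) hw₀ hp (subset_univ s)

theorem tendsto_garNorm_indicator_Iio (hw₀ : ∀ n, 0 ≤ w n) (hp : 0 < p) (f : ℕ → ℝ) :
    Tendsto (fun N => garNorm w p ((Iio N).indicator f)) atTop (𝓝 (garNorm w p f)) := by
  have hmono : Monotone fun N => garNorm w p ((Iio N).indicator f) :=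
    fun N N' h => garNorm_indicator_mono hw₀ hp.le (Iio_subset_Iio h)
  convert tendsto_atTop_iSup hmono
  refine le_antisymm (garNorm_le_of_forall_tsum_le hp fun φ hφ => ?_)
    (iSup_le fun N => garNorm_indicator_le hw₀ hp.le _)
  rw [ENNReal.tsum_eq_iSup_nat]
  refine iSup_le fun K => ?_
  -- the first `K` terms of `φ` only see `f` below `φ K`
  calc ∑ k ∈ Finset.range K, ENNReal.ofReal (|f (φ k)| ^ p * w k)
      = ∑ k ∈ Finset.range K, ENNReal.ofReal (|(Iio (φ K)).indicator f (φ k)| ^ p * w k) :=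
        Finset.sum_congr rfl fun k hk => by
          rw [indicator_of_mem (mem_Iio.2 (hφ (Finset.mem_range.1 hk)))]
    _ ≤ ∑' k, ENNReal.ofReal (|(Iio (φ K)).indicator f (φ k)| ^ p * w k) :=
        ENNReal.sum_le_tsum _
    _ ≤ garNorm w p ((Iio (φ K)).indicator f) ^ p := tsum_le_garNorm_rpow hp hφ
    _ ≤ (⨆ N, garNorm w p ((Iio N).indicator f)) ^ p :=
        ENNReal.rpow_le_rpow (le_iSup (fun N => garNorm w p ((Iio N).indicator f)) _) hp.le

theorem tendsto_zero_of_garNorm_ne_top (hw₀ : ∀ n, 0 ≤ w n) (hw' : ¬ Summable w) (hp : 0 < p)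
    (hf : garNorm w p f ≠ ⊤) : Tendsto f atTop (𝓝 0) := by
  rw [Metric.tendsto_atTop]
  by_contra! hlarge
  obtain ⟨s, hs, hfreq⟩ := hlarge
  set S : Set ℕ := {i | s ≤ |f i|}
  have hS : S.Infinite := Nat.frequently_atTop_iff_infinite.1 <|
    frequently_atTop.2 fun N => by simpa [Real.dist_eq] using hfreq N
  have hsum : ∑' k, ENNReal.ofReal (s ^ p * w k) ≤ garNorm w p f ^ p :=
    (ENNReal.tsum_le_tsum fun k => ENNReal.ofReal_le_ofReal <| mul_le_mul_of_nonneg_right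
      (Real.rpow_le_rpow hs.le (Nat.nth_mem_of_infinite hS k) hp.le) (hw₀ k)).trans
      (tsum_le_garNorm_rpow hp (Nat.nth_strictMono hS))
  refine hw' ((summable_mul_left_iff (Real.rpow_pos_of_pos hs p).ne').1 ?_)
  have hfin := ENNReal.summable_toReal
    (ne_top_of_le_ne_top (ENNReal.rpow_ne_top_of_nonneg hp.le hf) hsum)
  simpa [ENNReal.toReal_ofReal (mul_nonneg (Real.rpow_nonneg hs.le p) (hw₀ _))] using hfin

def selectionSum (w : ℕ → ℝ) (p : ℝ) (f : ℕ → ℝ) (K : Finset ℕ) (φ : ℕ → ℕ) : ℝ≥0∞ :=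
  ∑ k ∈ K, ENNReal.ofReal (|f (φ k)| ^ p * w k)

lemma StrictMonoOn.count_le {K : Finset ℕ} {φ : ℕ → ℕ} (hφ : StrictMonoOn φ K) {k : ℕ}
    (hk : k ∈ K) {S : Set ℕ} [DecidablePred (· ∈ S)] (hS : ∀ x ∈ S, x < φ k → x ∈ φ '' K) :
    Nat.count (· ∈ S) (φ k) ≤ k := by
  classical
  have hsub : (Finset.range (φ k)).filter (· ∈ S) ⊆ ((Finset.range k).filter (· ∈ K)).image φ := by
    intro x hx
    obtain ⟨hxk, hxS⟩ := Finset.mem_filter.1 hx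
    obtain ⟨k', hk', rfl⟩ := hS x hxS (Finset.mem_range.1 hxk)
    exact Finset.mem_image_of_mem _ (Finset.mem_filter.2
      ⟨Finset.mem_range.2 ((hφ.lt_iff_lt hk' hk).1 (Finset.mem_range.1 hxk)), hk'⟩)
  rw [Nat.count_eq_card_filter_range]
  exact (Finset.card_le_card hsub).trans <| Finset.card_image_le.trans <|
    (Finset.card_filter_le _ _).trans (Finset.card_range k).le

lemma selectionSum_le_garNorm_rpow (hw : Antitone w) (hp : 0 < p) {K : Finset ℕ} {φ : ℕ → ℕ}
    (hφ : StrictMonoOn φ K) : selectionSum w p f K φ ≤ garNorm w p f ^ p := by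
  classical
  -- enumerate `φ '' K` followed by all larger numbers; `φ k` then sits at a position `j k ≤ k`
  set S : Set ℕ := φ '' K ∪ Ici (K.sup φ + 1)
  have hS : S.Infinite := (Set.Ici_infinite _).mono subset_union_right
  have hmem : ∀ k ∈ K, φ k ∈ S := fun k hk => Or.inl ⟨k, hk, rfl⟩
  set j : ℕ → ℕ := fun k => Nat.count (· ∈ S) (φ k)
  have hj : ∀ k ∈ K, j k ≤ k := fun k hk => hφ.count_le hk fun x hx hlt => hx.resolve_right
    (not_le.2 ((hlt.trans_le (Finset.le_sup (f := φ) hk)).trans (Nat.lt_succ_self _)))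
  have hj_inj : Set.InjOn j K := fun k hk k' hk' h =>
    hφ.injOn hk hk' (Nat.count_injective (hmem k hk) (hmem k' hk') h)
  calc selectionSum w p f K φ
      ≤ ∑ k ∈ K, ENNReal.ofReal (|f (Nat.nth (· ∈ S) (j k))| ^ p * w (j k)) :=
        Finset.sum_le_sum fun k hk => by
          rw [Nat.nth_count (hmem k hk)]
          gcongr
          exact hw (hj k hk)
    _ = ∑ i ∈ K.image j, ENNReal.ofReal (|f (Nat.nth (· ∈ S) i)| ^ p * w i) := by
        rw [Finset.sum_image hj_inj]
    _ ≤ ∑' i, ENNReal.ofReal (|f (Nat.nth (· ∈ S) i)| ^ p * w i) := ENNReal.sum_le_tsum _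
    _ ≤ garNorm w p f ^ p := tsum_le_garNorm_rpow hp (Nat.nth_strictMono hS)

lemma exists_lt_selectionSum (hp : 0 < p) {ε : ℝ≥0∞} (h : ε < garNorm w p f) :
    ∃ φ : ℕ → ℕ, StrictMono φ ∧ ∃ N, ε ^ p < selectionSum w p f (Finset.range N) φ := by
  obtain ⟨⟨φ, hφ⟩, hlt⟩ := lt_iSup_iff.1 h
  have hsum := ENNReal.rpow_lt_rpow hlt hp
  rw [← ENNReal.rpow_mul, one_div_mul_cancel hp.ne', ENNReal.rpow_one,
    ENNReal.tsum_eq_iSup_nat, lt_iSup_iff] at hsum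
  exact ⟨φ, hφ, hsum⟩

lemma selectionSum_le_ofReal_mul (hw₀ : ∀ n, 0 ≤ w n) {t : ℝ} (ht : ∀ i, |f i| ^ p ≤ t)
    (K : Finset ℕ) (φ : ℕ → ℕ) :
    selectionSum w p f K φ ≤ ENNReal.ofReal (t * ∑ k ∈ K, w k) := by
  have ht0 : 0 ≤ t := (Real.rpow_nonneg (abs_nonneg _) p).trans (ht 0)
  rw [Finset.mul_sum, ENNReal.ofReal_sum_of_nonneg fun k _ => mul_nonneg ht0 (hw₀ k)]
  exact Finset.sum_le_sum fun k _ =>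
    ENNReal.ofReal_le_ofReal (mul_le_mul_of_nonneg_right (ht _) (hw₀ k))

lemma selectionSum_indicator_Ici (hp : 0 < p) (M : ℕ) (K : Finset ℕ) (φ : ℕ → ℕ) :
    selectionSum w p ((Ici M).indicator f) K φ = selectionSum w p f (K.filter (M ≤ φ ·)) φ := by
  rw [selectionSum, selectionSum, Finset.sum_filter]
  refine Finset.sum_congr rfl fun k _ => ?_
  by_cases hk : M ≤ φ k
  · simp [hk]
  · simp [hk, Real.zero_rpow hp.ne']

lemma exists_selectionSum_union {K J : Finset ℕ} {φ ψ : ℕ → ℕ} (hφ : StrictMonoOn φ K)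
    (hψ : StrictMonoOn ψ J) (h : ∀ k ∈ K, ∀ j ∈ J, k < j ∧ φ k < ψ j) :
    ∃ χ : ℕ → ℕ, StrictMonoOn χ ↑(K ∪ J) ∧
      selectionSum w p f (K ∪ J) χ = selectionSum w p f K φ + selectionSum w p f J ψ := by
  classical
  have hJK : ∀ j ∈ J, j ∉ K := fun j hj hk => (h j hk j hj).1.false
  refine ⟨K.piecewise φ ψ, ?_, ?_⟩
  · intro a ha b hb hab
    simp only [Finset.coe_union, mem_union, Finset.mem_coe] at ha hb
    rcases ha with ha | ha <;> rcases hb with hb | hb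
    · simpa [Finset.piecewise_eq_of_mem, ha, hb] using hφ ha hb hab
    · simpa [Finset.piecewise_eq_of_mem, ha, hJK b hb] using (h a ha b hb).2
    · exact absurd hab (h b hb a ha).1.not_gt
    · simpa [hJK a ha, hJK b hb] using hψ ha hb hab
  · rw [selectionSum, Finset.sum_union (Finset.disjoint_right.2 hJK)]
    congr 1 <;> refine Finset.sum_congr rfl fun k hk => ?_
    · rw [Finset.piecewise_eq_of_mem _ _ _ hk]
    · rw [Finset.piecewise_eq_of_notMem _ _ _ (hJK k hk)]

lemma exists_selectionSum_ge_of_forall_lt_garNorm (hw₀ : ∀ n, 0 ≤ w n) (hp : 0 < p)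
    {ε : ℝ≥0∞} (hε : ε ≠ 0) (h : ∀ M, ε < garNorm w p ((Ici M).indicator f))
    (hf : Tendsto f atTop (𝓝 0)) (L M : ℕ) :
    ∃ J : Finset ℕ, ∃ ψ : ℕ → ℕ, StrictMonoOn ψ J ∧ (∀ j ∈ J, L ≤ j ∧ M ≤ ψ j) ∧
      ε ^ p / 2 ≤ selectionSum w p f J ψ := by
  classical
  set δ := ε ^ p / 2
  have hδ : δ ≠ ⊤ := ENNReal.div_ne_top
    (ENNReal.rpow_ne_top_of_nonneg hp.le (h 0).ne_top) two_ne_zero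
  have hδ0 : 0 < δ.toReal := ENNReal.toReal_pos (ENNReal.div_ne_zero.2
    ⟨(ENNReal.rpow_pos (pos_iff_ne_zero.2 hε) (h 0).ne_top).ne', ENNReal.ofNat_ne_top⟩) hδ
  set W := ∑ k ∈ Finset.range L, w k
  have hW : 0 ≤ W := Finset.sum_nonneg fun k _ => hw₀ k
  -- beyond `M'` the entries are so small that the first `L` positions carry at most `δ`
  set t := δ.toReal / (W + 1)
  have hsmall : ∀ᶠ i in atTop, |f i| ^ p ≤ t := by
    have hlim := hf.abs.rpow_const (Or.inr hp.le)
    rw [abs_zero, Real.zero_rpow hp.ne'] at hlim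
    exact hlim.eventually (Iic_mem_nhds (by positivity))
  obtain ⟨M₀, hM₀⟩ := eventually_atTop.1 hsmall
  set M' := max M M₀
  set g := (Ici M').indicator f
  have hg : ∀ i, |g i| ^ p ≤ t := fun i => by
    by_cases hi : M' ≤ i
    · simpa [g, hi] using hM₀ i (le_of_max_le_right hi)
    · rw [show g i = 0 from indicator_of_notMem hi f, abs_zero, Real.zero_rpow hp.ne']
      positivity
  obtain ⟨ψ, hψ, N, hN⟩ := exists_lt_selectionSum hp (h M')
  set A := Finset.range N
  have hhead : selectionSum w p g (A.filter (· < L)) ψ ≤ δ := by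
    refine (selectionSum_le_ofReal_mul hw₀ hg _ _).trans (ENNReal.ofReal_le_of_le_toReal ?_)
    calc t * ∑ k ∈ A.filter (· < L), w k ≤ t * W := by
          gcongr
          exact Finset.sum_le_sum_of_subset_of_nonneg
            (fun k hk => Finset.mem_range.2 (Finset.mem_filter.1 hk).2) fun k _ _ => hw₀ k
      _ ≤ δ.toReal := by
          rw [div_mul_eq_mul_div, div_le_iff₀ (by positivity)]
          nlinarith
  refine ⟨(A.filter (¬ · < L)).filter (M' ≤ ψ ·), ψ, hψ.strictMonoOn _, fun j hj => ?_, ?_⟩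
  · simp only [Finset.mem_filter] at hj
    exact ⟨not_lt.1 hj.1.2, le_of_max_le_left hj.2⟩
  · rw [← selectionSum_indicator_Ici hp]
    refine ENNReal.le_of_add_le_add_left hδ ?_
    calc δ + δ = ε ^ p := ENNReal.add_halves _
      _ ≤ selectionSum w p g A ψ := hN.le
      _ = selectionSum w p g (A.filter (· < L)) ψ + selectionSum w p g (A.filter (¬ · < L)) ψ :=
          (Finset.sum_filter_add_sum_filter_not _ _ _).symm
      _ ≤ δ + selectionSum w p g (A.filter (¬ · < L)) ψ := by gcongr

theorem garNorm_eq_top_of_forall_lt_garNorm_indicator_Ici (hw : Antitone w)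
    (hw₀ : ∀ n, 0 ≤ w n) (hw' : ¬ Summable w) (hp : 0 < p) {ε : ℝ≥0∞} (hε : ε ≠ 0)
    (h : ∀ M, ε < garNorm w p ((Ici M).indicator f)) : garNorm w p f = ⊤ := by
  by_contra hf
  have hf₀ := tendsto_zero_of_garNorm_ne_top hw₀ hw' hp hf
  -- gliding hump: append, far to the right, a selection of mass at least `ε ^ p / 2`
  have hgrow : ∀ r : ℕ, ∃ K : Finset ℕ, ∃ φ : ℕ → ℕ, StrictMonoOn φ K ∧
      r * (ε ^ p / 2) ≤ selectionSum w p f K φ := by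
    intro r
    induction r with
    | zero => exact ⟨∅, id, by simp [StrictMonoOn], by simp⟩
    | succ r ih =>
      obtain ⟨K, φ, hφ, hK⟩ := ih
      obtain ⟨J, ψ, hψ, hJ, hJsum⟩ := exists_selectionSum_ge_of_forall_lt_garNorm hw₀ hp hε h
        hf₀ (K.sup id + 1) (K.sup φ + 1)
      obtain ⟨χ, hχ, hsum⟩ := exists_selectionSum_union (w := w) (p := p) (f := f) hφ hψ
        fun k hk j hj => ⟨(Finset.le_sup (f := id) hk).trans_lt (hJ j hj).1,
          (Finset.le_sup (f := φ) hk).trans_lt (hJ j hj).2⟩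
      refine ⟨K ∪ J, χ, hχ, ?_⟩
      rw [hsum, Nat.cast_succ, add_mul, one_mul]
      exact add_le_add hK hJsum
  have hδ : ε ^ p / 2 ≠ 0 := ENNReal.div_ne_zero.2
    ⟨(ENNReal.rpow_pos (pos_iff_ne_zero.2 hε) (h 0).ne_top).ne', ENNReal.ofNat_ne_top⟩
  obtain ⟨r, hr⟩ := ENNReal.exists_nat_gt (ENNReal.div_ne_top
    (ENNReal.rpow_ne_top_of_nonneg hp.le hf) hδ)
  obtain ⟨K, φ, hφ, hK⟩ := hgrow r
  rw [ENNReal.div_lt_iff (Or.inl hδ) (Or.inr (ENNReal.rpow_ne_top_of_nonneg hp.le hf))] at hr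
  exact (hK.trans (selectionSum_le_garNorm_rpow hw hp hφ)).not_gt hr

theorem tendsto_garNorm_indicator_Ici (hw : Antitone w) (hw₀ : ∀ n, 0 ≤ w n)
    (hw' : ¬ Summable w) (hp : 0 < p) (hf : garNorm w p f ≠ ⊤) :
    Tendsto (fun M => garNorm w p ((Ici M).indicator f)) atTop (𝓝 0) := by
  have hanti : Antitone fun M => garNorm w p ((Ici M).indicator f) :=
    fun M M' hM => garNorm_indicator_mono hw₀ hp.le (Ici_subset_Ici.2 hM)
  rw [ENNReal.tendsto_atTop_zero_iff_le_of_antitone hanti]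
  by_contra! ⟨ε, hε, hlt⟩
  exact hf (garNorm_eq_top_of_forall_lt_garNorm_indicator_Ici hw hw₀ hw' hp hε.ne' hlt)

end

theorem garling_block_partial_sums_unbounded_general (p : ℝ) (hp : 1 ≤ p)
    (w : ℕ → ℝ) (hw : IsGarlingWeight w)
    (P : ℕ → ℕ) (hP0 : P 0 = 0) (hP : StrictMono P)
    (a : ℕ → ℝ) (y : ℕ → ℕ → ℝ)
    (hy : ∀ n i, y n i = if P n ≤ i ∧ i < P (n + 1) then a i else 0)
    (c : ℝ) (hc : 0 < c)
    (hlb : ∀ n, ENNReal.ofReal c ≤ garNorm w p (y n)) :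
    Tendsto (fun m => garNorm w p (fun i => ∑ n ∈ Finset.range m, y n i)) atTop (𝓝 ∞) := by
  have hp₀ : 0 < p := zero_lt_one.trans_le hp
  have hw₀ : ∀ n, 0 ≤ w n := fun n => (hw.pos n).le
  have hblock : ∀ n, y n = (Ico (P n) (P (n + 1))).indicator a :=
    fun n => funext fun i => by simp [hy, indicator_apply]
  have hpartial : ∀ m, (fun i => ∑ n ∈ Finset.range m, y n i) = (Iio (P m)).indicator a := by
    intro m
    induction m with
    | zero => simp [hP0]
    | succ m ih =>
      funext i
      rw [Finset.sum_range_succ, congrFun ih i, hblock,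
        ← Iio_union_Ico_eq_Iio (hP.monotone m.le_succ), indicator_union_of_disjoint]
      exact (Iio_disjoint_Ici le_rfl).mono_right Ico_subset_Ici_self
  have htop : garNorm w p a = ⊤ := by
    by_contra ha
    obtain ⟨M, hM⟩ := ((tendsto_garNorm_indicator_Ici (antitone_nat_of_succ_le hw.antitone) hw₀
      hw.not_summable hp₀ ha).eventually (gt_mem_nhds (ENNReal.ofReal_pos.2 hc))).exists
    refine (hlb M).not_gt (lt_of_le_of_lt ?_ hM)
    rw [hblock]
    exact garNorm_indicator_mono hw₀ hp₀.le fun i hi => hP.le_apply.trans hi.1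
  simp_rw [hpartial, ← htop]
  exact (tendsto_garNorm_indicator_Iio hw₀ hp₀ a).comp hP.tendsto_atTop

/-- If `(y_n)` is a semi-normalized block basic sequence of the canonical
basis of `g(w,p)`, then `‖∑_{n=1}^m y_n‖_{g(w,p)} → ∞` as `m → ∞`. -/
theorem garling_block_partial_sums_unbounded (p : ℝ) (hp : 1 ≤ p)
    (w : ℕ → ℝ) (hw : IsGarlingWeight w)
    (P : ℕ → ℕ) (hP0 : P 0 = 0) (hP : StrictMono P)
    (a : ℕ → ℝ) (y : ℕ → ℕ → ℝ)
    (hy : ∀ n i, y n i = if P n ≤ i ∧ i < P (n + 1) then a i else 0)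
    (hynz : ∀ n, y n ≠ 0)
    (c C : ℝ) (hc : 0 < c)
    (hlb : ∀ n, ENNReal.ofReal c ≤ garNorm w p (y n))
    (hub : ∀ n, garNorm w p (y n) ≤ ENNReal.ofReal C) :
    Tendsto (fun m => garNorm w p (fun i => ∑ n ∈ Finset.range m, y n i)) atTop (𝓝 ∞) :=
  garling_block_partial_sums_unbounded_general p hp w hw P hP0 hP a y hy c hc hlb

end
end

section
/- Let 1 ≤ p < ∞ and let w = (w_n)_{n≥1} be a normalized nonincreasing bi-regular weight (w_1 = 1, w_{n+1} ≤ w_n for all n, and both w and its conjugate weight w* are regular). Then w ∈ 𝒲 (i.e., lim_n w_n = 0 and ∑_n w_n = ∞), and the canonical basis of g(w,p) is not a symmetric basis: there is no constant C ≥ 1 such that for every permutation σ of ℕ and all finitely supported scalars (a_n), ‖∑ a_n g_{σ(n)}‖_{g(w,p)} ≤ C‖∑ a_n g_n‖_{g(w,p)}. -/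
/-!
Write `S m = w 0 + ⋯ + w (m - 1)`. Regularity of `w` gives `w n ≳ 1 / n`, so `S m → ∞`;
regularity of `w*` together with `w n ≤ w 0` gives `w n ≲ 1 / log n`, so `w n → 0`.

For non-symmetry, test the vector with entries `S (m - n) ^ (-1/p)` for `n < m`. Along any
increasing `φ` meeting `{0, …, m - 1}` in `k` points, the `n`-th chosen coordinate is at most
`m - (k - n)`, so the `p`-th power of its Garling norm is at most `∑_{n<k} w n / S (k - n)`,
which regularity of `w*` bounds uniformly in `k`. Reversing the first `m` coordinates gives
entries `S (n + 1) ^ (-1/p)`, and `φ = id` already shows that the `p`-th power of the norm of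
the reversed vector is at least `∑_{n<m} w n / S (n + 1) ≥ log S (m + 1) → ∞`.
-/

open Filter Function Set
open scoped ENNReal NNReal Topology

noncomputable section

/-- A weight `w` is regular if `sup_m (1/(m w_m)) ∑_{n=1}^m w_n < ∞`.
(Sequences are indexed from `0`, so the paper's `w_m` is `w (m-1)`.) -/
def IsRegularWeight (w : ℕ → ℝ) : Prop :=
  ∃ C : ℝ, 0 < C ∧ ∀ m : ℕ, ∑ n ∈ Finset.range (m + 1), w n ≤ C * (((m : ℝ) + 1) * w m)

/-- The conjugate weight `w*` of `w`, given by `w*_n = 1/(n w_n)`. -/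
def conjWeight (w : ℕ → ℝ) : ℕ → ℝ := fun n => 1 / (((n : ℝ) + 1) * w n)

open Finset

def partialSum (w : ℕ → ℝ) (m : ℕ) : ℝ := ∑ n ∈ range m, w n

section Weights

variable {w : ℕ → ℝ}

lemma partialSum_succ (w : ℕ → ℝ) (m : ℕ) : partialSum w (m + 1) = partialSum w m + w m :=
  sum_range_succ w m

lemma partialSum_nonneg (hw : ∀ n, 0 ≤ w n) (m : ℕ) : 0 ≤ partialSum w m :=
  sum_nonneg fun n _ => hw n

lemma partialSum_pos (hw : ∀ n, 0 < w n) {m : ℕ} (hm : 0 < m) : 0 < partialSum w m :=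
  sum_pos (fun n _ => hw n) (nonempty_range_iff.mpr hm.ne')

lemma partialSum_mono (hw : ∀ n, 0 ≤ w n) : Monotone (partialSum w) := fun _ _ h =>
  sum_le_sum_of_subset_of_nonneg (range_subset_range.mpr h) fun n _ _ => hw n

lemma succ_mul_le_partialSum (hw : Antitone w) (m : ℕ) :
    ((m : ℝ) + 1) * w m ≤ partialSum w (m + 1) := by
  simpa [partialSum] using card_nsmul_le_sum (range (m + 1)) w (w m)
    fun n hn => hw (Nat.lt_succ_iff.mp (mem_range.mp hn))

lemma succ_mul_conjWeight (w : ℕ → ℝ) (m : ℕ) : ((m : ℝ) + 1) * conjWeight w m = (w m)⁻¹ := by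
  rw [conjWeight, one_div, mul_inv, ← mul_assoc, mul_inv_cancel₀ (by positivity), one_mul]

lemma isRegularWeight_conjWeight_iff :
    IsRegularWeight (conjWeight w) ↔
      ∃ C, 0 < C ∧ ∀ m, ∑ n ∈ range (m + 1), conjWeight w n ≤ C / w m := by
  simp only [IsRegularWeight, succ_mul_conjWeight, div_eq_mul_inv]

lemma IsRegularWeight.not_summable (hreg : IsRegularWeight w) (hw : ∀ n, 0 ≤ w n)
    (h0 : 0 < w 0) : ¬ Summable w := by
  obtain ⟨C, hC, hle⟩ := hreg
  have harmonic_le : ∀ m : ℕ, w 0 / C * (1 / ((m : ℝ) + 1)) ≤ w m := fun m => by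
    have : w 0 ≤ C * (((m : ℝ) + 1) * w m) :=
      (single_le_sum (fun n _ => hw n) (by simp)).trans (hle m)
    rw [div_mul_div_comm, mul_one, div_le_iff₀ (by positivity)]
    linarith
  intro hsum
  have := (summable_mul_left_iff (by positivity)).mp
    (hsum.of_nonneg_of_le (fun m => by positivity) harmonic_le)
  exact mt (summable_nat_add_iff 1).mp Real.not_summable_one_div_natCast (by exact_mod_cast this)

lemma tendsto_zero_of_isRegularWeight_conjWeight (hw : ∀ n, 0 < w n) (hanti : Antitone w)
    (hreg : IsRegularWeight (conjWeight w)) : Tendsto w atTop (𝓝 0) := by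
  obtain ⟨C, -, hle⟩ := isRegularWeight_conjWeight_iff.mp hreg
  set H : ℕ → ℝ := fun m => ∑ n ∈ range (m + 1), 1 / ((n : ℝ) + 1)
  have hH : Tendsto H atTop atTop :=
    Real.tendsto_sum_range_one_div_nat_succ_atTop.comp (tendsto_add_atTop_nat 1)
  have hbound : ∀ m, w m ≤ C * w 0 / H m := fun m => by
    have harmonic_le : H m / w 0 ≤ C / w m := by
      refine le_trans ?_ (hle m)
      rw [sum_div]
      refine sum_le_sum fun n _ => ?_
      rw [div_div, conjWeight]
      have := hw n
      gcongr
      exact hanti n.zero_le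
    have hHpos : 0 < H m := sum_pos (fun n _ => by positivity) nonempty_range_add_one
    rw [div_le_div_iff₀ (hw 0) (hw m)] at harmonic_le
    rw [le_div_iff₀ hHpos]
    linarith
  exact squeeze_zero (fun m => (hw m).le) hbound (tendsto_const_nhds.div_atTop hH)

lemma sum_Ico_reflect_div_partialSum_le_one (hw : ∀ n, 0 < w n) {t k : ℕ}
    (hk : k ≤ 2 * t + 1) :
    ∑ i ∈ Ico t k, w (k - 1 - i) / partialSum w (i + 1) ≤ 1 := by
  have hS : 0 < partialSum w (t + 1) := partialSum_pos hw t.succ_pos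
  have hmono := partialSum_mono fun n => (hw n).le
  have hnum : ∑ i ∈ Ico t k, w (k - 1 - i) = partialSum w (k - t) := by
    rw [sum_Ico_eq_sum_range, partialSum, ← sum_range_reflect]
    exact sum_congr rfl fun j hj => by congr 1; have := mem_range.mp hj; omega
  calc ∑ i ∈ Ico t k, w (k - 1 - i) / partialSum w (i + 1)
      ≤ ∑ i ∈ Ico t k, w (k - 1 - i) / partialSum w (t + 1) :=
        sum_le_sum fun i hi => div_le_div_of_nonneg_left (hw _).le hS
          (hmono (by have := (mem_Ico.mp hi).1; omega))
    _ = partialSum w (k - t) / partialSum w (t + 1) := by rw [← sum_div, hnum]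
    _ ≤ 1 := (div_le_one hS).mpr (hmono (by omega))

lemma sum_range_reflect_div_partialSum_le (hw : ∀ n, 0 < w n) (hanti : Antitone w) {C : ℝ}
    (hC0 : 0 ≤ C) (hC : ∀ m, ∑ n ∈ range (m + 1), conjWeight w n ≤ C / w m) {t k : ℕ}
    (hk : 2 * t ≤ k) :
    ∑ i ∈ range t, w (k - 1 - i) / partialSum w (i + 1) ≤ C := by
  obtain rfl | ⟨s, rfl⟩ : t = 0 ∨ ∃ s, t = s + 1 := by cases t <;> simp
  · simpa using hC0
  calc ∑ i ∈ range (s + 1), w (k - 1 - i) / partialSum w (i + 1)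
      ≤ ∑ i ∈ range (s + 1), w s * conjWeight w i := by
        refine sum_le_sum fun i hi => ?_
        have hi := mem_range.mp hi
        have := hw i
        rw [conjWeight, mul_one_div]
        exact div_le_div₀ (hw s).le (hanti (by omega)) (by positivity)
          (succ_mul_le_partialSum hanti i)
    _ = w s * ∑ i ∈ range (s + 1), conjWeight w i := (mul_sum ..).symm
    _ ≤ w s * (C / w s) := mul_le_mul_of_nonneg_left (hC s) (hw s).le
    _ = C := mul_div_cancel₀ C (hw s).ne'

/-- Split at `n = k - k / 2`. For larger `n` the numerators are at most `w (k / 2 - 1)` while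
`partialSum w (k - n) ≥ (k - n) * w (k - n - 1)`, so regularity of `w*` bounds that part by `C`;
for smaller `n` the denominators are at least `partialSum w (k - k / 2)`, the sum of their
numerators, so that part is at most `1`. -/
lemma sum_div_partialSum_sub_le (hw : ∀ n, 0 < w n) (hanti : Antitone w) {C : ℝ}
    (hC0 : 0 ≤ C) (hC : ∀ m, ∑ n ∈ range (m + 1), conjWeight w n ≤ C / w m) (k : ℕ) :
    ∑ n ∈ range k, w n / partialSum w (k - n) ≤ 1 + C := by
  have hreindex : ∀ i ∈ range k,
      w (k - 1 - i) / partialSum w (k - (k - 1 - i)) = w (k - 1 - i) / partialSum w (i + 1) :=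
    fun i hi => by have := mem_range.mp hi; congr 3; omega
  rw [← sum_range_reflect, sum_congr rfl hreindex,
    ← sum_range_add_sum_Ico _ (Nat.div_le_self k 2)]
  linarith [sum_range_reflect_div_partialSum_le hw hanti hC0 hC (t := k / 2) (k := k) (by omega),
    sum_Ico_reflect_div_partialSum_le_one hw (t := k / 2) (k := k) (by omega)]

lemma log_partialSum_sub_log_le_sum (hw : ∀ n, 0 < w n) (hanti : Antitone w) (m : ℕ) :
    Real.log (partialSum w (m + 1)) - Real.log (w 0) ≤
      ∑ i ∈ range m, w i / partialSum w (i + 1) := by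
  induction m with
  | zero => simp [partialSum]
  | succ m ih =>
    have hS := partialSum_pos hw m.succ_pos
    have hS' := partialSum_pos hw (m + 1).succ_pos
    have hstep : Real.log (partialSum w (m + 2)) - Real.log (partialSum w (m + 1)) ≤
        w m / partialSum w (m + 1) := by
      rw [← Real.log_div hS'.ne' hS.ne']
      refine (Real.log_le_sub_one_of_pos (div_pos hS' hS)).trans ?_
      rw [partialSum_succ w (m + 1), add_div, div_self hS.ne', add_sub_cancel_left]
      exact div_le_div_of_nonneg_right (hanti m.le_succ) hS.le
    rw [sum_range_succ]
    linarith

/-- The Abel–Dini theorem. -/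
lemma tendsto_sum_div_partialSum_atTop (hw : ∀ n, 0 < w n) (hanti : Antitone w)
    (hsum : ¬ Summable w) :
    Tendsto (fun m => ∑ i ∈ range m, w i / partialSum w (i + 1)) atTop atTop := by
  have hS : Tendsto (partialSum w) atTop atTop :=
    (not_summable_iff_tendsto_nat_atTop_of_nonneg fun n => (hw n).le).mp hsum
  have hlog := Real.tendsto_log_atTop.comp (hS.comp (tendsto_add_atTop_nat 1))
  exact tendsto_atTop_mono (log_partialSum_sub_log_le_sum hw hanti)
    (tendsto_atTop_add_const_right _ _ hlog)

end Weights

def rangeRevPerm (m : ℕ) : Equiv.Perm ℕ :=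
  Involutive.toPerm (fun i => if i < m then m - 1 - i else i) fun i => by
    dsimp only
    split_ifs <;> omega

lemma ite_rangeRevPerm_symm_mem_range {α : Type*} [Zero α] (m : ℕ) (g : ℕ → α) :
    (fun i => if (rangeRevPerm m).symm i ∈ range m then g (m - (rangeRevPerm m).symm i) else 0) =
      fun i => if i < m then g (i + 1) else 0 := by
  funext i
  rw [show (rangeRevPerm m).symm i = if i < m then m - 1 - i else i from rfl]
  by_cases hi : i < m
  · rw [if_pos hi, if_pos (Finset.mem_range.mpr (by omega)), if_pos hi]
    congr 1
    omega
  · simp [hi]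

lemma StrictMono.exists_lt_iff_lt {φ : ℕ → ℕ} (hφ : StrictMono φ) (m : ℕ) :
    ∃ k, ∀ n, φ n < m ↔ n < k := by
  classical
  have hex : ∃ n, m ≤ φ n := ⟨m, hφ.id_le m⟩
  refine ⟨Nat.find hex, fun n => ⟨fun h => ?_, fun h => ?_⟩⟩
  · by_contra! hn
    exact (Nat.find_spec hex).not_gt (lt_of_le_of_lt (hφ.monotone hn) h)
  · exact not_le.mp (Nat.find_min hex h)

lemma abs_inv_rpow_inv_rpow {x p : ℝ} (hx : 0 ≤ x) (hp : p ≠ 0) : |x⁻¹ ^ p⁻¹| ^ p = x⁻¹ := by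
  rw [abs_of_nonneg (by positivity), Real.rpow_inv_rpow (inv_nonneg.mpr hx) hp]

lemma tsum_rpow_le_garNorm (w : ℕ → ℝ) (p : ℝ) (f : ℕ → ℝ) :
    (∑' n, ENNReal.ofReal (|f n| ^ p * w n)) ^ (1 / p) ≤ garNorm w p f :=
  le_iSup (fun φ : {φ : ℕ → ℕ // StrictMono φ} =>
    (∑' n, ENNReal.ofReal (|f (φ.1 n)| ^ p * w n)) ^ (1 / p)) ⟨id, strictMono_id⟩

section TestVectors

variable {w : ℕ → ℝ} {p : ℝ}

lemma ofReal_sum_div_partialSum_rpow_le_garNorm (hw : ∀ n, 0 ≤ w n) (hp : 0 < p) (m : ℕ) :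
    ENNReal.ofReal (∑ i ∈ range m, w i / partialSum w (i + 1)) ^ (1 / p) ≤
      garNorm w p (fun i => if i < m then (partialSum w (i + 1))⁻¹ ^ p⁻¹ else 0) := by
  refine le_trans (ENNReal.rpow_le_rpow ?_ (by positivity)) (tsum_rpow_le_garNorm w p _)
  rw [ENNReal.ofReal_sum_of_nonneg fun i _ => div_nonneg (hw i) (partialSum_nonneg hw _)]
  refine le_trans (le_of_eq (sum_congr rfl fun i hi => ?_)) (ENNReal.sum_le_tsum (range m))
  rw [if_pos (mem_range.mp hi), abs_inv_rpow_inv_rpow (partialSum_nonneg hw _) hp.ne',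
    inv_mul_eq_div]

lemma garNorm_le_of_conjWeight (hw : ∀ n, 0 < w n) (hanti : Antitone w) (hp : 0 < p) {C : ℝ}
    (hC0 : 0 ≤ C) (hC : ∀ m, ∑ n ∈ range (m + 1), conjWeight w n ≤ C / w m) (m : ℕ) :
    garNorm w p (fun i => if i ∈ range m then (partialSum w (m - i))⁻¹ ^ p⁻¹ else 0) ≤
      ENNReal.ofReal (1 + C) ^ (1 / p) := by
  refine iSup_le fun ⟨φ, hφ⟩ => ENNReal.rpow_le_rpow ?_ (by positivity)
  obtain ⟨k, hk⟩ := hφ.exists_lt_iff_lt m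
  have hS : ∀ n ∈ range k, 0 < partialSum w (m - φ n) := fun n hn =>
    partialSum_pos hw (by have := (hk n).mpr (mem_range.mp hn); omega)
  have hsupp : ∀ n ∉ range k,
      ENNReal.ofReal (|if φ n ∈ range m then (partialSum w (m - φ n))⁻¹ ^ p⁻¹ else 0| ^ p
        * w n) = 0 := fun n hn => by
    rw [Finset.mem_range, ← hk] at hn
    rw [if_neg (by simpa using hn), abs_zero, Real.zero_rpow hp.ne', zero_mul, ENNReal.ofReal_zero]
  have hterm : ∀ n ∈ range k,
      ENNReal.ofReal (|if φ n ∈ range m then (partialSum w (m - φ n))⁻¹ ^ p⁻¹ else 0| ^ p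
        * w n) = ENNReal.ofReal (w n / partialSum w (m - φ n)) := fun n hn => by
    rw [if_pos (mem_range.mpr ((hk n).mpr (mem_range.mp hn))),
      abs_inv_rpow_inv_rpow (hS n hn).le hp.ne', inv_mul_eq_div]
  have hgap : ∀ n ∈ range k, k - n ≤ m - φ n := fun n hn => by
    have hn := mem_range.mp hn
    have hφn := hφ.add_le_nat (k - 1 - n) n
    have hlast := (hk (k - 1)).mpr (by omega)
    rw [Nat.sub_add_cancel (by omega : n ≤ k - 1)] at hφn
    omega
  dsimp only
  rw [tsum_eq_sum hsupp, sum_congr rfl hterm,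
    ← ENNReal.ofReal_sum_of_nonneg fun n hn => div_nonneg (hw n).le (hS n hn).le]
  refine ENNReal.ofReal_le_ofReal (le_trans (sum_le_sum fun n hn => ?_)
    (sum_div_partialSum_sub_le hw hanti hC0 hC k))
  exact div_le_div_of_nonneg_left (hw n).le (partialSum_pos hw (by have := mem_range.mp hn; omega))
    (partialSum_mono (fun n => (hw n).le) (hgap n hn))

end TestVectors

lemma le_mul_of_ofReal_rpow_le {L C B p : ℝ} (hp : 0 < p) (hC : 0 ≤ C) (hB : 0 ≤ B)
    (h : ENNReal.ofReal L ^ (1 / p) ≤ ENNReal.ofReal C * ENNReal.ofReal B ^ (1 / p)) :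
    L ≤ C ^ p * B := by
  have hC' : ENNReal.ofReal C = ENNReal.ofReal (C ^ p) ^ (1 / p) := by
    rw [← ENNReal.ofReal_rpow_of_nonneg hC hp.le, ← ENNReal.rpow_mul, mul_one_div_cancel hp.ne',
      ENNReal.rpow_one]
  rw [hC', ← ENNReal.mul_rpow_of_nonneg _ _ (by positivity), ← ENNReal.ofReal_mul (by positivity),
    ENNReal.rpow_le_rpow_iff (by positivity), ENNReal.ofReal_le_ofReal_iff (by positivity)] at h
  exact h

/-- **Statement 19.** If `w` is a normalized nonincreasing bi-regular weight (both `w` and its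
conjugate weight `w*` are regular), then `w ∈ 𝒲` (i.e. additionally `w_n → 0` and
`∑ w_n = ∞`), and the canonical basis of `g(w,p)` is not symmetric: there is no constant
`C ≥ 1` such that `‖∑ a_n g_{σ(n)}‖_{g(w,p)} ≤ C ‖∑ a_n g_n‖_{g(w,p)}` for every permutation
`σ` of `ℕ` and all finitely supported scalars `(a_n)`. -/
theorem garling_biregular_not_symmetric (p : ℝ) (hp : 1 ≤ p)
    (w : ℕ → ℝ) (hpos : ∀ n, 0 < w n) (hfirst : w 0 = 1)
    (hanti : ∀ n, w (n + 1) ≤ w n)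
    (hreg : IsRegularWeight w) (hreg' : IsRegularWeight (conjWeight w)) :
    IsGarlingWeight w ∧
    ¬ ∃ C : ℝ, 1 ≤ C ∧
        ∀ (σ : Equiv.Perm ℕ) (a : ℕ → ℝ) (s : Finset ℕ),
          garNorm w p (fun i => if σ.symm i ∈ s then a (σ.symm i) else 0)
            ≤ ENNReal.ofReal C * garNorm w p (fun i => if i ∈ s then a i else 0) := by
  have hw : Antitone w := antitone_nat_of_succ_le hanti
  have hsum : ¬ Summable w := hreg.not_summable (fun n => (hpos n).le) (hpos 0)
  refine ⟨⟨hpos, hfirst, hanti, tendsto_zero_of_isRegularWeight_conjWeight hpos hw hreg', hsum⟩,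
    ?_⟩
  rintro ⟨C, hC, hsym⟩
  obtain ⟨B, hB, hconj⟩ := isRegularWeight_conjWeight_iff.mp hreg'
  have hp0 : 0 < p := by linarith
  obtain ⟨m, hm⟩ := ((tendsto_sum_div_partialSum_atTop hpos hw hsum).eventually_gt_atTop
    (C ^ p * (1 + B))).exists
  have h := hsym (rangeRevPerm m) (fun n => (partialSum w (m - n))⁻¹ ^ p⁻¹) (range m)
  rw [ite_rangeRevPerm_symm_mem_range m fun j => (partialSum w j)⁻¹ ^ p⁻¹] at h
  have hbound := le_mul_of_ofReal_rpow_le hp0 (by linarith) (by linarith)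
    ((ofReal_sum_div_partialSum_rpow_le_garNorm (fun n => (hpos n).le) hp0 m).trans
      (h.trans (mul_le_mul_right (garNorm_le_of_conjWeight hpos hw hp0 hB.le hconj m) _)))
  linarith
end
end
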